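/- arXiv:0907.4018 — 6 statements merged into one kernel-verified Lean document; each statement's English description precedes it below -/
import Mathlib

section
/- Let s ∈ [0,1] and let (l_n)_{n≥1}, (u_n)_{n≥1} be real sequences in [0,1] with l_n nondecreasing, u_n nonincreasing, l_n ≤ s ≤ u_n for all n, l_n → s and u_n → s. Let G be uniformly distributed on [0,1]. Then: (a) for every n, P(l_n < G ≤ u_n) = u_n − l_n; (b) P(for all n, l_n < G ≤ u_n) = 0, i.e. the retrospective search terminates almost surely; (c) P(there exists n with G ≤ l_n) = s, i.e. the output is a valid s-coin. -/
open MeasureTheory ProbabilityTheory Set Filter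

/-- correctness of Algorithm 2, which compares a single uniform `G` against
deterministic monotone lower bounds `l n` and upper bounds `u n` for `s`. -/
theorem stmt_1 {Ω : Type*} [MeasureSpace Ω] [IsProbabilityMeasure (ℙ : Measure Ω)]
    (s : ℝ) (hs : s ∈ Icc (0 : ℝ) 1)
    (l u : ℕ → ℝ)
    (hl01 : ∀ n, l n ∈ Icc (0 : ℝ) 1) (hu01 : ∀ n, u n ∈ Icc (0 : ℝ) 1)
    (hlmono : Monotone l) (huanti : Antitone u)
    (hls : ∀ n, l n ≤ s) (hsu : ∀ n, s ≤ u n)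
    (hltend : Tendsto l atTop (nhds s)) (hutend : Tendsto u atTop (nhds s))
    (G : Ω → ℝ) (hGm : Measurable G)
    (hGlaw : Measure.map G ℙ = volume.restrict (Icc (0 : ℝ) 1)) :
    (∀ n, ℙ {ω | l n < G ω ∧ G ω ≤ u n} = ENNReal.ofReal (u n - l n)) ∧
      ℙ {ω | ∀ n, l n < G ω ∧ G ω ≤ u n} = 0 ∧
      ℙ {ω | ∃ n, G ω ≤ l n} = ENNReal.ofReal s := by
  have key : ∀ (A : Set ℝ), MeasurableSet A →
      ℙ (G ⁻¹' A) = volume (A ∩ Icc (0 : ℝ) 1) := by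
    intro A hA
    rw [← Measure.map_apply hGm hA, hGlaw, Measure.restrict_apply hA]
  have part1 : ∀ n, ℙ {ω | l n < G ω ∧ G ω ≤ u n} = ENNReal.ofReal (u n - l n) := by
    intro n
    have hset : {ω | l n < G ω ∧ G ω ≤ u n} = G ⁻¹' (Ioc (l n) (u n)) := rfl
    rw [hset, key _ measurableSet_Ioc]
    have hsub : Ioc (l n) (u n) ∩ Icc (0 : ℝ) 1 = Ioc (l n) (u n) := by
      apply inter_eq_left.mpr
      intro x hx
      exact ⟨le_trans (hl01 n).1 (le_of_lt hx.1), le_trans hx.2 (hu01 n).2⟩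
    rw [hsub, Real.volume_Ioc]
  refine ⟨part1, ?_, ?_⟩
  · -- part 2
    have hset : {ω | ∀ n, l n < G ω ∧ G ω ≤ u n} =
        ⋂ n, {ω | l n < G ω ∧ G ω ≤ u n} := by ext ω; simp
    have hle : ∀ n, ℙ {ω | ∀ n, l n < G ω ∧ G ω ≤ u n} ≤ ENNReal.ofReal (u n - l n) := by
      intro n
      rw [← part1 n, hset]
      exact measure_mono (iInter_subset _ n)
    have htend : Tendsto (fun n => ENNReal.ofReal (u n - l n)) atTop (nhds 0) := by
      have : Tendsto (fun n => u n - l n) atTop (nhds (s - s)) := hutend.sub hltend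
      rw [sub_self] at this
      simpa using (ENNReal.tendsto_ofReal this)
    have := ge_of_tendsto htend (Eventually.of_forall hle)
    exact le_antisymm this zero_le
  · -- part 3
    have hset : {ω | ∃ n, G ω ≤ l n} = ⋃ n, G ⁻¹' (Iic (l n)) := by ext ω; simp
    have hmeas : ∀ n, ℙ (G ⁻¹' (Iic (l n))) = ENNReal.ofReal (l n) := by
      intro n
      rw [key _ measurableSet_Iic]
      have : Iic (l n) ∩ Icc (0 : ℝ) 1 = Icc 0 (l n) := by
        ext x
        constructor
        · rintro ⟨h1, h2, _⟩; exact ⟨h2, h1⟩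
        · rintro ⟨h1, h2⟩; exact ⟨h2, h1, le_trans h2 (hl01 n).2⟩
      rw [this, Real.volume_Icc, sub_zero]
    have hmono : Monotone (fun n => G ⁻¹' (Iic (l n))) := fun m n h x hx =>
      le_trans hx (hlmono h)
    have htend := tendsto_measure_iUnion_atTop (μ := (ℙ : Measure Ω)) hmono
    have htend2 : Tendsto (fun n => ℙ (G ⁻¹' (Iic (l n)))) atTop
        (nhds (ENNReal.ofReal s)) := by
      simp only [hmeas]
      exact ENNReal.tendsto_ofReal hltend
    rw [hset]
    exact tendsto_nhds_unique htend htend2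
end

section
/- Let s ∈ [0,1] and let (L_n)_{n≥1}, (U_n)_{n≥1} be random sequences on a common probability space such that almost surely, for every n: L_n ≤ U_n, L_n ∈ [0,1], U_n ∈ [0,1], L_{n−1} ≤ L_n and U_{n−1} ≥ U_n; and such that E[L_n] → s and E[U_n] → s. Let G be uniformly distributed on [0,1] and independent of the whole sequence ((L_n, U_n))_{n≥1}. Then P(there exists n with G ≤ L_n) = s, and for every n, P(L_n < G ≤ U_n) = E[U_n] − E[L_n]. (Hence Algorithm 3 outputs a valid s-coin, and the probability that it needs more than n iterations equals u_n − l_n where l_n = E[L_n], u_n = E[U_n].) -/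
open MeasureTheory ProbabilityTheory Set Filter

/-- Key lemma: if `G` is Uniform(0,1), `X` is a.s. in `[0,1]` and independent of `G`,
then `P(G ≤ X) = E[X]`. -/
lemma key_le {Ω : Type*} [MeasureSpace Ω] [IsProbabilityMeasure (ℙ : Measure Ω)]
    (G X : Ω → ℝ) (hGm : Measurable G) (hXm : Measurable X)
    (hGlaw : Measure.map G ℙ = volume.restrict (Icc (0 : ℝ) 1))
    (hX : ∀ᵐ ω ∂ℙ, X ω ∈ Icc (0 : ℝ) 1)
    (hind : IndepFun G X ℙ) :
    ℙ {ω | G ω ≤ X ω} = ENNReal.ofReal (∫ ω, X ω ∂ℙ) := by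
  have hXint : Integrable X ℙ := by
    refine Integrable.mono' (integrable_const 1) hXm.aestronglyMeasurable ?_
    filter_upwards [hX] with ω hω
    rw [Real.norm_eq_abs, abs_le]
    exact ⟨le_trans (by norm_num) hω.1, hω.2⟩
  have hmap : Measure.map (fun ω => (G ω, X ω)) ℙ
      = (Measure.map G ℙ).prod (Measure.map X ℙ) :=
    (indepFun_iff_map_prod_eq_prod_map_map hGm.aemeasurable hXm.aemeasurable).mp hind
  have hset : MeasurableSet {p : ℝ × ℝ | p.1 ≤ p.2} :=
    measurableSet_le measurable_fst measurable_snd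
  have h1 : ℙ {ω | G ω ≤ X ω}
      = Measure.map (fun ω => (G ω, X ω)) ℙ {p : ℝ × ℝ | p.1 ≤ p.2} := by
    rw [Measure.map_apply (hGm.prodMk hXm) hset]; rfl
  rw [h1, hmap, Measure.prod_apply_symm hset]
  have hXae : ∀ᵐ x ∂(Measure.map X ℙ), x ∈ Icc (0 : ℝ) 1 :=
    (ae_map_iff hXm.aemeasurable measurableSet_Icc).mpr hX
  have h2 : ∫⁻ x, (Measure.map G ℙ) ((fun g => (g, x)) ⁻¹' {p : ℝ × ℝ | p.1 ≤ p.2})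
        ∂(Measure.map X ℙ) = ∫⁻ x, ENNReal.ofReal x ∂(Measure.map X ℙ) := by
    refine lintegral_congr_ae ?_
    filter_upwards [hXae] with x hx
    have hpre : (fun g => (g, x)) ⁻¹' {p : ℝ × ℝ | p.1 ≤ p.2} = Iic x := rfl
    rw [hpre, hGlaw, Measure.restrict_apply measurableSet_Iic]
    have : Iic x ∩ Icc (0:ℝ) 1 = Icc 0 x := by
      ext g
      simp only [mem_inter_iff, mem_Iic, mem_Icc]
      exact ⟨fun ⟨h1, h2, _⟩ => ⟨h2, h1⟩, fun ⟨h1, h2⟩ => ⟨h2, h1, le_trans h2 hx.2⟩⟩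
    rw [this, Real.volume_Icc, sub_zero]
  rw [h2, lintegral_map ENNReal.measurable_ofReal hXm,
    ofReal_integral_eq_lintegral_ofReal hXint]
  filter_upwards [hX] with ω hω using hω.1


/-- Lemma 2 of the paper, validity of Algorithm 3: with almost-surely monotone
random bounds `L n ↗`, `U n ↘` in `[0,1]` whose expectations converge to `s`, and `G` an
independent `Uniform(0,1)` variable, `P(∃ n, G ≤ L n) = s` and
`P(L n < G ≤ U n) = E[U n] − E[L n]` for every `n`. -/
theorem stmt_3 {Ω : Type*} [MeasureSpace Ω] [IsProbabilityMeasure (ℙ : Measure Ω)]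
    (s : ℝ) (hs : s ∈ Icc (0 : ℝ) 1)
    (L U : ℕ → Ω → ℝ)
    (hLm : ∀ n, Measurable (L n)) (hUm : ∀ n, Measurable (U n))
    (h_as : ∀ᵐ ω ∂ℙ, ∀ n, L n ω ≤ U n ω ∧ L n ω ∈ Icc (0 : ℝ) 1 ∧ U n ω ∈ Icc (0 : ℝ) 1 ∧
      L n ω ≤ L (n + 1) ω ∧ U (n + 1) ω ≤ U n ω)
    (hLtend : Tendsto (fun n => ∫ ω, L n ω ∂ℙ) atTop (nhds s))
    (hUtend : Tendsto (fun n => ∫ ω, U n ω ∂ℙ) atTop (nhds s))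
    (G : Ω → ℝ) (hGm : Measurable G)
    (hGlaw : Measure.map G ℙ = volume.restrict (Icc (0 : ℝ) 1))
    (hindep : IndepFun G (fun ω => fun n => (L n ω, U n ω)) ℙ) :
    ℙ {ω | ∃ n, G ω ≤ L n ω} = ENNReal.ofReal s ∧
      ∀ n, ℙ {ω | L n ω < G ω ∧ G ω ≤ U n ω} =
        ENNReal.ofReal ((∫ ω, U n ω ∂ℙ) - ∫ ω, L n ω ∂ℙ) := by
  -- independence of G from each L n, U n
  have hindL : ∀ n, IndepFun G (L n) ℙ := fun n =>
    hindep.comp measurable_id (measurable_fst.comp (measurable_pi_apply n))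
  have hindU : ∀ n, IndepFun G (U n) ℙ := fun n =>
    hindep.comp measurable_id (measurable_snd.comp (measurable_pi_apply n))
  have hLIcc : ∀ n, ∀ᵐ ω ∂ℙ, L n ω ∈ Icc (0:ℝ) 1 := fun n => by
    filter_upwards [h_as] with ω hω using (hω n).2.1
  have hUIcc : ∀ n, ∀ᵐ ω ∂ℙ, U n ω ∈ Icc (0:ℝ) 1 := fun n => by
    filter_upwards [h_as] with ω hω using (hω n).2.2.1
  have hPL : ∀ n, ℙ {ω | G ω ≤ L n ω} = ENNReal.ofReal (∫ ω, L n ω ∂ℙ) := fun n =>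
    key_le G (L n) hGm (hLm n) hGlaw (hLIcc n) (hindL n)
  have hPU : ∀ n, ℙ {ω | G ω ≤ U n ω} = ENNReal.ofReal (∫ ω, U n ω ∂ℙ) := fun n =>
    key_le G (U n) hGm (hUm n) hGlaw (hUIcc n) (hindU n)
  constructor
  · -- part 1
    set A : ℕ → Set Ω := fun n => {ω | G ω ≤ L n ω} with hA
    set B : ℕ → Set Ω := fun n => ⋃ k ≤ n, A k with hB
    have hBmono : Monotone B := fun m n hmn =>
      biUnion_mono (fun k (hk : k ≤ m) => hk.trans hmn) (fun _ _ => subset_rfl)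
    have hUnion : ⋃ n, B n = {ω | ∃ n, G ω ≤ L n ω} := by
      apply Subset.antisymm
      · exact iUnion_subset fun n => iUnion₂_subset fun k _ ω hω => ⟨k, hω⟩
      · intro ω ⟨n, hn⟩
        exact mem_iUnion.mpr ⟨n, mem_iUnion₂.mpr ⟨n, le_refl n, hn⟩⟩
    have hBA : ∀ n, ℙ (B n) = ℙ (A n) := by
      intro n
      apply measure_congr
      filter_upwards [h_as] with ω hω
      have hmono : Monotone fun k => L k ω :=
        monotone_nat_of_le_succ fun m => (hω m).2.2.2.1
      show (ω ∈ B n) = (ω ∈ A n)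
      simp only [hB, hA, mem_iUnion, mem_setOf_eq, eq_iff_iff]
      exact ⟨fun ⟨k, hk, h⟩ => le_trans h (hmono hk), fun h => ⟨n, le_refl n, h⟩⟩
    have h1 : Tendsto (fun n => ℙ (B n)) atTop (nhds (ℙ (⋃ n, B n))) :=
      tendsto_measure_iUnion_atTop hBmono
    have h2 : Tendsto (fun n => ℙ (B n)) atTop (nhds (ENNReal.ofReal s)) := by
      have : (fun n => ℙ (B n)) = fun n => ENNReal.ofReal (∫ ω, L n ω ∂ℙ) := by
        funext n; rw [hBA n, hPL n]
      rw [this]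
      exact (ENNReal.continuous_ofReal.tendsto s).comp hLtend
    rw [← hUnion]
    exact tendsto_nhds_unique h1 h2
  · -- part 2
    intro n
    have hLnn : (0:ℝ) ≤ ∫ ω, L n ω ∂ℙ :=
      integral_nonneg_of_ae (by filter_upwards [hLIcc n] with ω hω using hω.1)
    have hdiff : {ω | L n ω < G ω ∧ G ω ≤ U n ω}
        = {ω | G ω ≤ U n ω} \ {ω | G ω ≤ L n ω} := by
      ext ω
      simp only [mem_setOf_eq, mem_diff, not_le]
      tauto
    have hAmeas : MeasurableSet {ω | G ω ≤ L n ω} :=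
      measurableSet_le hGm (hLm n)
    have hinter : ℙ ({ω | G ω ≤ U n ω} ∩ {ω | G ω ≤ L n ω}) = ℙ {ω | G ω ≤ L n ω} := by
      apply measure_congr
      rw [Filter.eventuallyEq_set]
      filter_upwards [h_as] with ω hω
      simp only [mem_inter_iff, mem_setOf_eq]
      exact ⟨fun h => h.2, fun h => ⟨le_trans h (hω n).1, h⟩⟩
    have hsum := measure_diff_add_inter {ω | G ω ≤ U n ω} hAmeas (μ := ℙ)
    rw [hinter] at hsum
    have hfin : ℙ {ω | G ω ≤ L n ω} ≠ ⊤ := measure_ne_top _ _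
    have : ℙ ({ω | G ω ≤ U n ω} \ {ω | G ω ≤ L n ω})
        = ℙ {ω | G ω ≤ U n ω} - ℙ {ω | G ω ≤ L n ω} :=
      ENNReal.eq_sub_of_add_eq hfin hsum
    rw [hdiff, this, hPU n, hPL n, ENNReal.ofReal_sub _ hLnn]
end

section
/- Let (L_n)_{n≥1}, (U_n)_{n≥1} be random sequences on a common probability space with L_n ≤ U_n, L_n ∈ [0,1], U_n ∈ [0,1] almost surely for all n. Set L_0 ≡ 0, U_0 ≡ 1, let F_n = σ(L_n, U_n) and F_{n,∞} = σ(L_k, U_k : k ≥ n), and assume that for every n ≥ 1: E(L_{n−1} | F_{n,∞}) = E(L_{n−1} | F_n) =: L*_n ≤ L_n almost surely, E(U_{n−1} | F_{n,∞}) = E(U_{n−1} | F_n) =: U*_n ≥ U_n almost surely, and L*_n < U*_n almost surely. Define L̃_0 = 0, Ũ_0 = 1 and recursively L̃_n = L̃_{n−1} + ((L_n − L*_n)/(U*_n − L*_n))·(Ũ_{n−1} − L̃_{n−1}) and Ũ_n = Ũ_{n−1} − ((U*_n − U_n)/(U*_n − L*_n))·(Ũ_{n−1} − L̃_{n−1}).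 Then for every n ≥ 1, E[L̃_n] = E[L_n] and E[Ũ_n] = E[U_n], i.e. the construction preserves expectations. -/
open MeasureTheory ProbabilityTheory Set Filter

/-- expectation preservation in Algorithm 4, equation (11) of the paper:
with `L 0 ≡ 0`, `U 0 ≡ 1`, reverse time super/submartingale conditions w.r.t.
`F n = σ(L n, U n)` and `F_{n,∞} = σ(L k, U k : k ≥ n)`, the recursively built sequences
`L̃ n`, `Ũ n` satisfy `E[L̃ n] = E[L n]` and `E[Ũ n] = E[U n]`. Quantities indexed `n ≥ 1`
are written with index `n + 1`, so `L* (n+1) = E(L n | F (n+1))` etc. -/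
theorem stmt_5 {Ω : Type*} [MeasureSpace Ω] [IsProbabilityMeasure (ℙ : Measure Ω)]
    (L U Lt Ut : ℕ → Ω → ℝ)
    (hLm : ∀ n, Measurable (L n)) (hUm : ∀ n, Measurable (U n))
    (hL0 : ∀ ω, L 0 ω = 0) (hU0 : ∀ ω, U 0 ω = 1)
    (h_as : ∀ n, ∀ᵐ ω ∂ℙ, L n ω ≤ U n ω ∧ L n ω ∈ Icc (0 : ℝ) 1 ∧ U n ω ∈ Icc (0 : ℝ) 1)
    (F Finf : ℕ → MeasurableSpace Ω)
    (hF : ∀ n, F n = MeasurableSpace.comap (fun ω => (L n ω, U n ω)) inferInstance)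
    (hFinf : ∀ n, Finf n = ⨆ k, ⨆ _ : n ≤ k, F k)
    (hLsuper : ∀ n, ℙ[L n | Finf (n + 1)] =ᵐ[ℙ] ℙ[L n | F (n + 1)] ∧
      ℙ[L n | F (n + 1)] ≤ᵐ[ℙ] L (n + 1))
    (hUsub : ∀ n, ℙ[U n | Finf (n + 1)] =ᵐ[ℙ] ℙ[U n | F (n + 1)] ∧
      U (n + 1) ≤ᵐ[ℙ] ℙ[U n | F (n + 1)])
    (hstrict : ∀ n, ∀ᵐ ω ∂ℙ, (ℙ[L n | F (n + 1)]) ω < (ℙ[U n | F (n + 1)]) ω)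
    (hLt0 : ∀ ω, Lt 0 ω = 0) (hUt0 : ∀ ω, Ut 0 ω = 1)
    (hLtrec : ∀ n, Lt (n + 1) =ᵐ[ℙ] fun ω =>
      Lt n ω + ((L (n + 1) ω - (ℙ[L n | F (n + 1)]) ω) /
        ((ℙ[U n | F (n + 1)]) ω - (ℙ[L n | F (n + 1)]) ω)) * (Ut n ω - Lt n ω))
    (hUtrec : ∀ n, Ut (n + 1) =ᵐ[ℙ] fun ω =>
      Ut n ω - (((ℙ[U n | F (n + 1)]) ω - U (n + 1) ω) /
        ((ℙ[U n | F (n + 1)]) ω - (ℙ[L n | F (n + 1)]) ω)) * (Ut n ω - Lt n ω)) :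
    ∀ n, (∫ ω, Lt n ω ∂ℙ) = (∫ ω, L n ω ∂ℙ) ∧ (∫ ω, Ut n ω ∂ℙ) = ∫ ω, U n ω ∂ℙ := by
  have hFle : ∀ n, F n ≤ (inferInstance : MeasurableSpace Ω) := by
    intro n
    rw [hF n]
    exact measurable_iff_comap_le.1 ((hLm n).prodMk (hUm n))
  have hFinfle : ∀ n, Finf n ≤ (inferInstance : MeasurableSpace Ω) := by
    intro n; rw [hFinf n]; exact iSup₂_le fun k _ => hFle k
  have hFleFinf : ∀ n, F n ≤ Finf n := by
    intro n; rw [hFinf n]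
    exact le_iSup₂ (f := fun k (_ : n ≤ k) => F k) n le_rfl
  have hFinfmono : ∀ n, Finf (n + 1) ≤ Finf n := by
    intro n; rw [hFinf n, hFinf (n + 1)]
    exact iSup₂_le fun k hk => le_iSup₂ (f := fun k (_ : n ≤ k) => F k) k (Nat.le_of_succ_le hk)
  have key : ∀ n, Integrable (Lt n) ℙ ∧ Integrable (Ut n) ℙ ∧
      (∀ᵐ ω ∂ℙ, 0 ≤ Lt n ω ∧ Lt n ω ≤ Ut n ω ∧ Ut n ω ≤ 1) ∧
      ℙ[Lt n|Finf n] =ᵐ[ℙ] L n ∧ ℙ[Ut n|Finf n] =ᵐ[ℙ] U n := by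
    intro n
    induction n with
    | zero =>
      have e0 : Lt 0 = fun _ => (0 : ℝ) := funext hLt0
      have e1 : Ut 0 = fun _ => (1 : ℝ) := funext hUt0
      have eL : L 0 = fun _ => (0 : ℝ) := funext hL0
      have eU : U 0 = fun _ => (1 : ℝ) := funext hU0
      refine ⟨by rw [e0]; exact integrable_const 0, by rw [e1]; exact integrable_const 1,
        Eventually.of_forall fun ω => by simp [hLt0, hUt0], ?_, ?_⟩
      · rw [e0, eL, condExp_const (μ := ℙ) (hFinfle 0) (0 : ℝ)]
      · rw [e1, eU, condExp_const (μ := ℙ) (hFinfle 0) (1 : ℝ)]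
    | succ n ih =>
      obtain ⟨ihL, ihU, ihb, ihcL, ihcU⟩ := ih
      have hrecL := hLtrec n
      have hrecU := hUtrec n
      set Ls := ℙ[L n|F (n + 1)] with hLs
      set Us := ℙ[U n|F (n + 1)] with hUs
      set R : Ω → ℝ := fun ω => (L (n + 1) ω - Ls ω) / (Us ω - Ls ω) with hRdef
      set S : Ω → ℝ := fun ω => (Us ω - U (n + 1) ω) / (Us ω - Ls ω) with hSdef
      set D : Ω → ℝ := fun ω => Ut n ω - Lt n ω with hDdef
      -- pointwise bounds on R, S
      have hRS : ∀ᵐ ω ∂ℙ, 0 ≤ R ω ∧ 0 ≤ S ω ∧ R ω + S ω ≤ 1 := by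
        filter_upwards [hstrict n, (hLsuper n).2, (hUsub n).2, h_as (n + 1)] with ω h1 h2 h3 h4
        have hd : (0 : ℝ) < Us ω - Ls ω := sub_pos.2 h1
        refine ⟨div_nonneg (sub_nonneg.2 h2) hd.le, div_nonneg (sub_nonneg.2 h3) hd.le, ?_⟩
        simp only [hRdef, hSdef]
        rw [← add_div, div_le_one hd]
        linarith [h4.1]
      have hDb : ∀ᵐ ω ∂ℙ, 0 ≤ D ω ∧ D ω ≤ 1 := by
        filter_upwards [ihb] with ω h
        exact ⟨sub_nonneg.2 h.2.1, by simp only [hDdef]; linarith [h.1, h.2.2]⟩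
      -- measurability of R, S
      have hp : Measurable[F (n + 1)] fun ω => (L (n + 1) ω, U (n + 1) ω) := by
        rw [hF (n + 1)]; exact measurable_iff_comap_le.2 le_rfl
      have hRF : Measurable[F (n + 1)] R :=
        ((measurable_fst.comp hp).sub stronglyMeasurable_condExp.measurable).div
          (stronglyMeasurable_condExp.measurable.sub stronglyMeasurable_condExp.measurable)
      have hSF : Measurable[F (n + 1)] S :=
        (stronglyMeasurable_condExp.measurable.sub (measurable_snd.comp hp)).div
          (stronglyMeasurable_condExp.measurable.sub stronglyMeasurable_condExp.measurable)
      have hRF' : StronglyMeasurable[Finf (n + 1)] R :=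
        (hRF.mono (hFleFinf (n + 1)) le_rfl).stronglyMeasurable
      have hSF' : StronglyMeasurable[Finf (n + 1)] S :=
        (hSF.mono (hFleFinf (n + 1)) le_rfl).stronglyMeasurable
      have hRg : AEStronglyMeasurable R ℙ :=
        (hRF.mono (hFle (n + 1)) le_rfl).stronglyMeasurable.aestronglyMeasurable
      have hSg : AEStronglyMeasurable S ℙ :=
        (hSF.mono (hFle (n + 1)) le_rfl).stronglyMeasurable.aestronglyMeasurable
      -- integrability
      have hDint : Integrable D ℙ := ihU.sub ihL
      have hRDint : Integrable (R * D) ℙ := by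
        refine (integrable_const (1 : ℝ)).mono (hRg.mul hDint.aestronglyMeasurable) ?_
        filter_upwards [hRS, hDb] with ω h1 h2
        have : R ω * D ω ≤ 1 := by nlinarith [h1.1, h1.2.2, h2.1, h2.2]
        have h0 : 0 ≤ R ω * D ω := mul_nonneg h1.1 h2.1
        simp only [Pi.mul_apply, Real.norm_eq_abs, abs_of_nonneg h0]
        simpa using this
      have hSDint : Integrable (S * D) ℙ := by
        refine (integrable_const (1 : ℝ)).mono (hSg.mul hDint.aestronglyMeasurable) ?_
        filter_upwards [hRS, hDb] with ω h1 h2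
        have : S ω * D ω ≤ 1 := by nlinarith [h1.1, h1.2.1, h1.2.2, h2.1, h2.2]
        have h0 : 0 ≤ S ω * D ω := mul_nonneg h1.2.1 h2.1
        simp only [Pi.mul_apply, Real.norm_eq_abs, abs_of_nonneg h0]
        simpa using this
      have hLt1int : Integrable (Lt (n + 1)) ℙ := by
        refine (ihL.add hRDint).congr hrecL.symm
      have hUt1int : Integrable (Ut (n + 1)) ℙ := by
        refine (ihU.sub hSDint).congr hrecU.symm
      -- bounds propagation
      have hb1 : ∀ᵐ ω ∂ℙ, 0 ≤ Lt (n + 1) ω ∧ Lt (n + 1) ω ≤ Ut (n + 1) ω ∧ Ut (n + 1) ω ≤ 1 := by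
        filter_upwards [hrecL, hrecU, ihb, hRS, hDb] with ω e1 e2 hb hrs hd
        rw [e1, e2]
        have hR : (L (n + 1) ω - Ls ω) / (Us ω - Ls ω) = R ω := rfl
        have hS : (Us ω - U (n + 1) ω) / (Us ω - Ls ω) = S ω := rfl
        rw [hR, hS]
        have h1 : 0 ≤ R ω * D ω := mul_nonneg hrs.1 hd.1
        have h2 : 0 ≤ S ω * D ω := mul_nonneg hrs.2.1 hd.1
        have h3 : R ω * D ω + S ω * D ω ≤ D ω := by nlinarith [hrs.2.2, hd.1]
        have hDe : D ω = Ut n ω - Lt n ω := rfl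
        rw [hDe] at h1 h2 h3
        exact ⟨by linarith [hb.1], by linarith, by linarith [hb.2.2]⟩
      -- tower property: ℙ[Lt n | Finf (n+1)] = Ls, ℙ[Ut n | Finf (n+1)] = Us
      have hcLt : ℙ[Lt n|Finf (n + 1)] =ᵐ[ℙ] Ls := by
        have h1 : ℙ[Lt n|Finf (n + 1)] =ᵐ[ℙ] ℙ[ℙ[Lt n|Finf n]|Finf (n + 1)] :=
          (condExp_condExp_of_le (hFinfmono n) (hFinfle n)).symm
        exact h1.trans ((condExp_congr_ae ihcL).trans (hLsuper n).1)
      have hcUt : ℙ[Ut n|Finf (n + 1)] =ᵐ[ℙ] Us := by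
        have h1 : ℙ[Ut n|Finf (n + 1)] =ᵐ[ℙ] ℙ[ℙ[Ut n|Finf n]|Finf (n + 1)] :=
          (condExp_condExp_of_le (hFinfmono n) (hFinfle n)).symm
        exact h1.trans ((condExp_congr_ae ihcU).trans (hUsub n).1)
      have hcD : ℙ[D|Finf (n + 1)] =ᵐ[ℙ] fun ω => Us ω - Ls ω := by
        have h1 : ℙ[D|Finf (n + 1)] =ᵐ[ℙ] ℙ[Ut n|Finf (n + 1)] - ℙ[Lt n|Finf (n + 1)] :=
          condExp_sub ihU ihL _
        filter_upwards [h1, hcLt, hcUt] with ω e1 e2 e3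
        simp only [Pi.sub_apply] at e1
        rw [e1, e2, e3]
      -- main computation for L
      have hcL1 : ℙ[Lt (n + 1)|Finf (n + 1)] =ᵐ[ℙ] L (n + 1) := by
        have e1 : ℙ[Lt (n + 1)|Finf (n + 1)] =ᵐ[ℙ] ℙ[Lt n + R * D|Finf (n + 1)] :=
          condExp_congr_ae (hrecL.trans (Eventually.of_forall fun ω => rfl))
        have e2 : ℙ[Lt n + R * D|Finf (n + 1)] =ᵐ[ℙ]
            ℙ[Lt n|Finf (n + 1)] + ℙ[R * D|Finf (n + 1)] := condExp_add ihL hRDint _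
        have e3 : ℙ[R * D|Finf (n + 1)] =ᵐ[ℙ] R * ℙ[D|Finf (n + 1)] :=
          condExp_mul_of_stronglyMeasurable_left hRF' hRDint hDint
        filter_upwards [e1, e2, e3, hcLt, hcD, hstrict n] with ω a1 a2 a3 a4 a5 a6
        have a6' : Ls ω < Us ω := a6
        have hd : Us ω - Ls ω ≠ 0 := sub_ne_zero.2 a6'.ne'
        rw [a1, a2]
        simp only [Pi.add_apply, Pi.mul_apply]
        rw [a3, a4]
        simp only [Pi.mul_apply]
        rw [a5]
        simp only [hRdef]
        field_simp
        ring
      -- main computation for U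
      have hcU1 : ℙ[Ut (n + 1)|Finf (n + 1)] =ᵐ[ℙ] U (n + 1) := by
        have e1 : ℙ[Ut (n + 1)|Finf (n + 1)] =ᵐ[ℙ] ℙ[Ut n - S * D|Finf (n + 1)] :=
          condExp_congr_ae (hrecU.trans (Eventually.of_forall fun ω => rfl))
        have e2 : ℙ[Ut n - S * D|Finf (n + 1)] =ᵐ[ℙ]
            ℙ[Ut n|Finf (n + 1)] - ℙ[S * D|Finf (n + 1)] := condExp_sub ihU hSDint _
        have e3 : ℙ[S * D|Finf (n + 1)] =ᵐ[ℙ] S * ℙ[D|Finf (n + 1)] :=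
          condExp_mul_of_stronglyMeasurable_left hSF' hSDint hDint
        filter_upwards [e1, e2, e3, hcUt, hcD, hstrict n] with ω a1 a2 a3 a4 a5 a6
        have a6' : Ls ω < Us ω := a6
        have hd : Us ω - Ls ω ≠ 0 := sub_ne_zero.2 a6'.ne'
        rw [a1, a2]
        simp only [Pi.sub_apply, Pi.mul_apply]
        rw [a3, a4]
        simp only [Pi.mul_apply]
        rw [a5]
        simp only [hSdef]
        field_simp
        ring
      exact ⟨hLt1int, hUt1int, hb1, hcL1, hcU1⟩
  intro n
  obtain ⟨hL1, hU1, _, hcL, hcU⟩ := key n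
  constructor
  · calc ∫ ω, Lt n ω ∂ℙ = ∫ ω, (ℙ[Lt n|Finf n]) ω ∂ℙ :=
          (integral_condExp (μ := ℙ) (hFinfle n)).symm
      _ = ∫ ω, L n ω ∂ℙ := integral_congr_ae hcL
  · calc ∫ ω, Ut n ω ∂ℙ = ∫ ω, (ℙ[Ut n|Finf n]) ω ∂ℙ :=
          (integral_condExp (μ := ℙ) (hFinfle n)).symm
      _ = ∫ ω, U n ω ∂ℙ := integral_congr_ae hcU
end

section
/- Let s ∈ [0,1] and let (L_n)_{n≥1}, (U_n)_{n≥1} be random sequences on a common probability space with, almost surely for all n: L_n ≤ U_n, L_n ∈ [0,1], U_n ∈ [0,1]; with E[L_n] = l_n nondecreasing to s and E[U_n] = u_n nonincreasing to s; and, setting L_0 ≡ 0, U_0 ≡ 1, F_n = σ(L_n, U_n), F_{n,∞} = σ(L_k, U_k : k ≥ n), with E(L_{n−1} | F_{n,∞}) = E(L_{n−1} | F_n) =: L*_n ≤ L_n a.s., E(U_{n−1} | F_{n,∞}) = E(U_{n−1} | F_n) =: U*_n ≥ U_n a.s., and L*_n < U*_n a.s. Define L̃_n and Ũ_n by L̃_0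 = 0, Ũ_0 = 1, L̃_n = L̃_{n−1} + ((L_n − L*_n)/(U*_n − L*_n))·(Ũ_{n−1} − L̃_{n−1}), Ũ_n = Ũ_{n−1} − ((U*_n − U_n)/(U*_n − L*_n))·(Ũ_{n−1} − L̃_{n−1}). Let G be uniformly distributed on [0,1] and independent of ((L_n, U_n))_{n≥1}. Then P(there exists n with G ≤ L̃_n) = s, and for every n, P(L̃_n < G ≤ Ũ_n) = u_n − l_n. (Algorithm 4 outputs a valid s-coin and needs more than n iterations with probability u_n − l_n.) -/
open MeasureTheory ProbabilityTheory Set Filter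

lemma aux_le_prob {Ω : Type*} [MeasureSpace Ω] [IsProbabilityMeasure (ℙ : Measure Ω)]
    {Y G : Ω → ℝ} (hY : Measurable Y) (hG : Measurable G)
    (hGlaw : Measure.map G ℙ = volume.restrict (Icc (0 : ℝ) 1))
    (hind : IndepFun Y G ℙ) (hY01 : ∀ᵐ ω ∂ℙ, Y ω ∈ Icc (0 : ℝ) 1) :
    ℙ {ω | G ω ≤ Y ω} = ENNReal.ofReal (∫ ω, Y ω ∂ℙ) := by
  have hYint : Integrable Y ℙ := by
    refine (integrable_const (1 : ℝ)).mono' hY.aestronglyMeasurable ?_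
    filter_upwards [hY01] with ω h
    rw [Real.norm_eq_abs, abs_le]; exact ⟨by linarith [h.1], h.2⟩
  have hset : MeasurableSet {p : ℝ × ℝ | p.2 ≤ p.1} :=
    measurableSet_le measurable_snd measurable_fst
  have h1 : ℙ {ω | G ω ≤ Y ω}
      = Measure.map (fun ω => (Y ω, G ω)) ℙ {p : ℝ × ℝ | p.2 ≤ p.1} := by
    rw [Measure.map_apply (hY.prodMk hG) hset]; rfl
  rw [h1, (indepFun_iff_map_prod_eq_prod_map_map hY.aemeasurable hG.aemeasurable).mp hind,
    Measure.prod_apply hset]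
  have h2 : ∀ᵐ y ∂(Measure.map Y ℙ), y ∈ Icc (0 : ℝ) 1 :=
    (ae_map_iff hY.aemeasurable measurableSet_Icc).mpr hY01
  have h3 : ∫⁻ y, (Measure.map G ℙ) (Prod.mk y ⁻¹' {p : ℝ × ℝ | p.2 ≤ p.1}) ∂(Measure.map Y ℙ)
      = ∫⁻ y, ENNReal.ofReal y ∂(Measure.map Y ℙ) := by
    refine lintegral_congr_ae ?_
    filter_upwards [h2] with y hy
    have : Prod.mk y ⁻¹' {p : ℝ × ℝ | p.2 ≤ p.1} = Iic y := rfl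
    rw [this, hGlaw, Measure.restrict_apply measurableSet_Iic]
    have : Iic y ∩ Icc (0 : ℝ) 1 = Icc 0 y := by
      ext x; simp only [mem_inter_iff, mem_Iic, mem_Icc]
      constructor
      · rintro ⟨h1, h2, h3⟩; exact ⟨h2, h1⟩
      · rintro ⟨h1, h2⟩; exact ⟨h2, h1, h2.trans hy.2⟩
    rw [this, Real.volume_Icc, sub_zero]
  rw [h3, lintegral_map (by exact ENNReal.measurable_ofReal) hY,
    ← ofReal_integral_eq_lintegral_ofReal hYint ?_]
  filter_upwards [hY01] with ω h using h.1

lemma aux_indep {Ω : Type*} [MeasureSpace Ω] {β : Type*} [MeasurableSpace β]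
    {G : Ω → ℝ} {X : Ω → β} {Y : Ω → ℝ} (hind : IndepFun G X ℙ)
    (hY : Measurable[MeasurableSpace.comap X inferInstance] Y) :
    IndepFun Y G ℙ := by
  rw [indepFun_iff_measure_inter_preimage_eq_mul] at hind ⊢
  intro s t hs ht
  obtain ⟨s', hs', hpre⟩ : MeasurableSet[MeasurableSpace.comap X inferInstance] (Y ⁻¹' s) := hY hs
  rw [← hpre, Set.inter_comm, hind t s' ht hs', mul_comm]

/-- The recursively defined pair `(L̃ n, Ũ n)`. -/
noncomputable def ltut {Ω : Type*} (R R' : ℕ → Ω → ℝ) : ℕ → Ω → ℝ × ℝ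
  | 0 => fun _ => (0, 1)
  | n + 1 => fun ω =>
      ((ltut R R' n ω).1 + R n ω * ((ltut R R' n ω).2 - (ltut R R' n ω).1),
       (ltut R R' n ω).2 - R' n ω * ((ltut R R' n ω).2 - (ltut R R' n ω).1))

/-- Theorem 1 of the paper, validity of Algorithm 4: under the reverse time
super/submartingale conditions, the recursively built monotone sequences `L̃ n`, `Ũ n`
together with an independent uniform `G` produce a valid `s`-coin, and the algorithm needs
more than `n` iterations with probability `u n − l n`. Quantities indexed `n ≥ 1` are
written with index `n + 1`. -/
theorem stmt_6 {Ω : Type*} [MeasureSpace Ω] [IsProbabilityMeasure (ℙ : Measure Ω)]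
    (s : ℝ) (hs : s ∈ Icc (0 : ℝ) 1)
    (L U Lt Ut : ℕ → Ω → ℝ)
    (hLm : ∀ n, Measurable (L n)) (hUm : ∀ n, Measurable (U n))
    (hL0 : ∀ ω, L 0 ω = 0) (hU0 : ∀ ω, U 0 ω = 1)
    (h_as : ∀ n, ∀ᵐ ω ∂ℙ, L n ω ≤ U n ω ∧ L n ω ∈ Icc (0 : ℝ) 1 ∧ U n ω ∈ Icc (0 : ℝ) 1)
    (hlmono : Monotone fun n => ∫ ω, L n ω ∂ℙ)
    (huanti : Antitone fun n => ∫ ω, U n ω ∂ℙ)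
    (hltend : Tendsto (fun n => ∫ ω, L n ω ∂ℙ) atTop (nhds s))
    (hutend : Tendsto (fun n => ∫ ω, U n ω ∂ℙ) atTop (nhds s))
    (F Finf : ℕ → MeasurableSpace Ω)
    (hF : ∀ n, F n = MeasurableSpace.comap (fun ω => (L n ω, U n ω)) inferInstance)
    (hFinf : ∀ n, Finf n = ⨆ k, ⨆ _ : n ≤ k, F k)
    (hLsuper : ∀ n, ℙ[L n | Finf (n + 1)] =ᵐ[ℙ] ℙ[L n | F (n + 1)] ∧
      ℙ[L n | F (n + 1)] ≤ᵐ[ℙ] L (n + 1))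
    (hUsub : ∀ n, ℙ[U n | Finf (n + 1)] =ᵐ[ℙ] ℙ[U n | F (n + 1)] ∧
      U (n + 1) ≤ᵐ[ℙ] ℙ[U n | F (n + 1)])
    (hstrict : ∀ n, ∀ᵐ ω ∂ℙ, (ℙ[L n | F (n + 1)]) ω < (ℙ[U n | F (n + 1)]) ω)
    (hLt0 : ∀ ω, Lt 0 ω = 0) (hUt0 : ∀ ω, Ut 0 ω = 1)
    (hLtrec : ∀ n, Lt (n + 1) =ᵐ[ℙ] fun ω =>
      Lt n ω + ((L (n + 1) ω - (ℙ[L n | F (n + 1)]) ω) /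
        ((ℙ[U n | F (n + 1)]) ω - (ℙ[L n | F (n + 1)]) ω)) * (Ut n ω - Lt n ω))
    (hUtrec : ∀ n, Ut (n + 1) =ᵐ[ℙ] fun ω =>
      Ut n ω - (((ℙ[U n | F (n + 1)]) ω - U (n + 1) ω) /
        ((ℙ[U n | F (n + 1)]) ω - (ℙ[L n | F (n + 1)]) ω)) * (Ut n ω - Lt n ω))
    (G : Ω → ℝ) (hGm : Measurable G)
    (hGlaw : Measure.map G ℙ = volume.restrict (Icc (0 : ℝ) 1))
    (hindep : IndepFun G (fun ω => fun n => (L n ω, U n ω)) ℙ) :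
    ℙ {ω | ∃ n, G ω ≤ Lt n ω} = ENNReal.ofReal s ∧
      ∀ n, ℙ {ω | Lt n ω < G ω ∧ G ω ≤ Ut n ω} =
        ENNReal.ofReal ((∫ ω, U n ω ∂ℙ) - ∫ ω, L n ω ∂ℙ) := by
  classical
  set LS : ℕ → Ω → ℝ := fun n => ℙ[L n | F (n + 1)] with hLS
  set US : ℕ → Ω → ℝ := fun n => ℙ[U n | F (n + 1)] with hUS
  set R : ℕ → Ω → ℝ := fun n ω => (L (n + 1) ω - LS n ω) / (US n ω - LS n ω) with hR
  set R' : ℕ → Ω → ℝ := fun n ω => (US n ω - U (n + 1) ω) / (US n ω - LS n ω) with hR'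
  set A : ℕ → Ω → ℝ := fun n ω => (ltut R R' n ω).1 with hA
  set B : ℕ → Ω → ℝ := fun n ω => (ltut R R' n ω).2 with hB
  have hA0 : A 0 = fun _ => (0 : ℝ) := rfl
  have hB0 : B 0 = fun _ => (1 : ℝ) := rfl
  have hArec : ∀ n, A (n + 1) = fun ω => A n ω + R n ω * (B n ω - A n ω) := fun n => rfl
  have hBrec : ∀ n, B (n + 1) = fun ω => B n ω - R' n ω * (B n ω - A n ω) := fun n => rfl
  -- σ-algebra facts
  have hFle : ∀ n, F n ≤ (inferInstance : MeasurableSpace Ω) := by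
    intro n; rw [hF n]
    exact measurable_iff_comap_le.mp ((hLm n).prodMk (hUm n))
  have hFleFinf : ∀ n k, n ≤ k → F k ≤ Finf n := by
    intro n k hnk; rw [hFinf n]
    exact le_iSup₂_of_le k hnk le_rfl
  have hFinfle : ∀ n, Finf n ≤ (inferInstance : MeasurableSpace Ω) := by
    intro n; rw [hFinf n]
    exact iSup₂_le fun k _ => hFle k
  have hFinfmono : ∀ n, Finf (n + 1) ≤ Finf n := by
    intro n; rw [hFinf n, hFinf (n + 1)]
    exact iSup₂_le fun k hk => le_iSup₂_of_le k (Nat.le_of_succ_le hk) le_rfl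
  -- measurability
  have hLSsm : ∀ n, StronglyMeasurable[F (n + 1)] (LS n) := fun n => stronglyMeasurable_condExp
  have hUSsm : ∀ n, StronglyMeasurable[F (n + 1)] (US n) := fun n => stronglyMeasurable_condExp
  have hLF : ∀ n, Measurable[F (n + 1)] (L (n + 1)) := by
    intro n; rw [hF (n + 1)]
    exact measurable_fst.comp (comap_measurable _)
  have hUF : ∀ n, Measurable[F (n + 1)] (U (n + 1)) := by
    intro n; rw [hF (n + 1)]
    exact measurable_snd.comp (comap_measurable _)
  have hRsm : ∀ n, StronglyMeasurable[F (n + 1)] (R n) := by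
    intro n
    exact (((hLF n).sub (hLSsm n).measurable).div
      ((hUSsm n).measurable.sub (hLSsm n).measurable)).stronglyMeasurable
  have hR'sm : ∀ n, StronglyMeasurable[F (n + 1)] (R' n) := by
    intro n
    exact (((hUSsm n).measurable.sub (hUF n)).div
      ((hUSsm n).measurable.sub (hLSsm n).measurable)).stronglyMeasurable
  have hABm : ∀ n, Measurable[Finf 0] (A n) ∧ Measurable[Finf 0] (B n) := by
    intro n; induction n with
    | zero => exact ⟨measurable_const, measurable_const⟩
    | succ n ih =>
      have hRm : Measurable[Finf 0] (R n) :=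
        (hRsm n).measurable.mono (hFleFinf 0 (n + 1) (Nat.zero_le _)) le_rfl
      have hR'm : Measurable[Finf 0] (R' n) :=
        (hR'sm n).measurable.mono (hFleFinf 0 (n + 1) (Nat.zero_le _)) le_rfl
      rw [hArec n, hBrec n]
      exact ⟨ih.1.add (hRm.mul (ih.2.sub ih.1)), ih.2.sub (hR'm.mul (ih.2.sub ih.1))⟩
  have hAm : ∀ n, Measurable (A n) := fun n => (hABm n).1.mono (hFinfle 0) le_rfl
  have hBm : ∀ n, Measurable (B n) := fun n => (hABm n).2.mono (hFinfle 0) le_rfl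
  -- a.e. facts about the ratios
  have hgood : ∀ n, ∀ᵐ ω ∂ℙ, 0 ≤ R n ω ∧ 0 ≤ R' n ω ∧ R n ω + R' n ω ≤ 1 := by
    intro n
    filter_upwards [(hLsuper n).2, (hUsub n).2, hstrict n, h_as (n + 1)] with ω h1 h2 h3 h4
    have hd : 0 < US n ω - LS n ω := by simp only [hLS, hUS]; linarith
    refine ⟨div_nonneg (by simp only [hLS]; linarith) hd.le,
      div_nonneg (by simp only [hUS]; linarith) hd.le, ?_⟩
    rw [hR, hR', ← add_div, div_le_one hd]
    simp only [hLS, hUS]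
    linarith [h4.1]
  have hbnd : ∀ n, ∀ᵐ ω ∂ℙ, 0 ≤ A n ω ∧ A n ω ≤ B n ω ∧ B n ω ≤ 1 := by
    intro n; induction n with
    | zero =>
      refine Eventually.of_forall fun ω => ?_
      rw [hA0, hB0]; norm_num
    | succ n ih =>
      filter_upwards [ih, hgood n] with ω ⟨h1, h2, h3⟩ ⟨g1, g2, g3⟩
      simp only [hArec, hBrec]
      refine ⟨by nlinarith, by nlinarith, by nlinarith⟩
  have hAint : ∀ n, Integrable (A n) ℙ := by
    intro n
    refine (integrable_const (1 : ℝ)).mono' (hAm n).aestronglyMeasurable ?_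
    filter_upwards [hbnd n] with ω ⟨h1, h2, h3⟩
    rw [Real.norm_eq_abs, abs_le]; constructor <;> linarith
  have hBint : ∀ n, Integrable (B n) ℙ := by
    intro n
    refine (integrable_const (1 : ℝ)).mono' (hBm n).aestronglyMeasurable ?_
    filter_upwards [hbnd n] with ω ⟨h1, h2, h3⟩
    rw [Real.norm_eq_abs, abs_le]; constructor <;> linarith
  -- the central conditional expectation computation
  have hcond : ∀ n, ℙ[A n | Finf n] =ᵐ[ℙ] L n ∧ ℙ[B n | Finf n] =ᵐ[ℙ] U n := by
    intro n; induction n with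
    | zero =>
      constructor
      · rw [hA0, show L 0 = fun _ => (0 : ℝ) from funext hL0]
        exact Eventually.of_forall (congrFun (condExp_const (hFinfle 0) (0 : ℝ)))
      · rw [hB0, show U 0 = fun _ => (1 : ℝ) from funext hU0]
        exact Eventually.of_forall (congrFun (condExp_const (hFinfle 0) (1 : ℝ)))
    | succ n ih =>
      have hm : Finf (n + 1) ≤ (inferInstance : MeasurableSpace Ω) := hFinfle (n + 1)
      have hFm : F (n + 1) ≤ Finf (n + 1) := hFleFinf (n + 1) (n + 1) le_rfl
      set D : Ω → ℝ := fun ω => B n ω - A n ω with hD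
      have hDint : Integrable D ℙ := (hBint n).sub (hAint n)
      have hRDint : Integrable (R n * D) ℙ := by
        refine (integrable_const (1 : ℝ)).mono'
          (((hRsm n).measurable.mono (hFle (n+1)) le_rfl).mul
            ((hBm n).sub (hAm n))).aestronglyMeasurable ?_
        filter_upwards [hbnd n, hgood n] with ω ⟨h1, h2, h3⟩ ⟨g1, g2, g3⟩
        have hDω : D ω = B n ω - A n ω := rfl
        rw [Pi.mul_apply, Real.norm_eq_abs, abs_mul, hDω, abs_of_nonneg g1,
          abs_of_nonneg (by linarith : (0:ℝ) ≤ B n ω - A n ω)]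
        nlinarith
      have hR'Dint : Integrable (R' n * D) ℙ := by
        refine (integrable_const (1 : ℝ)).mono'
          (((hR'sm n).measurable.mono (hFle (n+1)) le_rfl).mul
            ((hBm n).sub (hAm n))).aestronglyMeasurable ?_
        filter_upwards [hbnd n, hgood n] with ω ⟨h1, h2, h3⟩ ⟨g1, g2, g3⟩
        have hDω : D ω = B n ω - A n ω := rfl
        rw [Pi.mul_apply, Real.norm_eq_abs, abs_mul, hDω, abs_of_nonneg g2,
          abs_of_nonneg (by linarith : (0:ℝ) ≤ B n ω - A n ω)]
        nlinarith
      -- conditional expectations of A n, B n given Finf (n+1)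
      have hcA : ℙ[A n | Finf (n + 1)] =ᵐ[ℙ] LS n := by
        calc ℙ[A n | Finf (n + 1)]
            =ᵐ[ℙ] ℙ[ℙ[A n | Finf n] | Finf (n + 1)] :=
              (condExp_condExp_of_le (hFinfmono n) (hFinfle n)).symm
          _ =ᵐ[ℙ] ℙ[L n | Finf (n + 1)] := condExp_congr_ae ih.1
          _ =ᵐ[ℙ] LS n := (hLsuper n).1
      have hcB : ℙ[B n | Finf (n + 1)] =ᵐ[ℙ] US n := by
        calc ℙ[B n | Finf (n + 1)]
            =ᵐ[ℙ] ℙ[ℙ[B n | Finf n] | Finf (n + 1)] :=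
              (condExp_condExp_of_le (hFinfmono n) (hFinfle n)).symm
          _ =ᵐ[ℙ] ℙ[U n | Finf (n + 1)] := condExp_congr_ae ih.2
          _ =ᵐ[ℙ] US n := (hUsub n).1
      have hcD : ℙ[D | Finf (n + 1)] =ᵐ[ℙ] fun ω => US n ω - LS n ω := by
        calc ℙ[D | Finf (n + 1)]
            =ᵐ[ℙ] ℙ[B n | Finf (n + 1)] - ℙ[A n | Finf (n + 1)] :=
              condExp_sub (hBint n) (hAint n) _
          _ =ᵐ[ℙ] fun ω => US n ω - LS n ω := hcB.sub hcA
      have hcRD : ℙ[R n * D | Finf (n + 1)] =ᵐ[ℙ] fun ω => R n ω * (US n ω - LS n ω) := by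
        calc ℙ[R n * D | Finf (n + 1)]
            =ᵐ[ℙ] R n * ℙ[D | Finf (n + 1)] :=
              condExp_mul_of_stronglyMeasurable_left ((hRsm n).mono hFm) hRDint hDint
          _ =ᵐ[ℙ] fun ω => R n ω * (US n ω - LS n ω) := by
              filter_upwards [hcD] with ω hω
              rw [Pi.mul_apply, hω]
      have hcR'D : ℙ[R' n * D | Finf (n + 1)] =ᵐ[ℙ] fun ω => R' n ω * (US n ω - LS n ω) := by
        calc ℙ[R' n * D | Finf (n + 1)]
            =ᵐ[ℙ] R' n * ℙ[D | Finf (n + 1)] :=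
              condExp_mul_of_stronglyMeasurable_left ((hR'sm n).mono hFm) hR'Dint hDint
          _ =ᵐ[ℙ] fun ω => R' n ω * (US n ω - LS n ω) := by
              filter_upwards [hcD] with ω hω
              rw [Pi.mul_apply, hω]
      constructor
      · calc ℙ[A (n + 1) | Finf (n + 1)]
            = ℙ[A n + R n * D | Finf (n + 1)] := by
              rw [show A n + R n * D = A (n + 1) from funext fun ω => rfl]
          _ =ᵐ[ℙ] ℙ[A n | Finf (n + 1)] + ℙ[R n * D | Finf (n + 1)] :=
              condExp_add (hAint n) hRDint _
          _ =ᵐ[ℙ] L (n + 1) := by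
              filter_upwards [hcA, hcRD, hstrict n] with ω h1 h2 h3
              have hne : US n ω - LS n ω ≠ 0 := by
                simp only [hLS, hUS]; exact sub_ne_zero.mpr (ne_of_gt h3)
              rw [Pi.add_apply, h1, h2, hR]
              rw [div_mul_cancel₀ _ hne]
              ring
      · calc ℙ[B (n + 1) | Finf (n + 1)]
            = ℙ[B n - R' n * D | Finf (n + 1)] := by
              rw [show B n - R' n * D = B (n + 1) from funext fun ω => rfl]
          _ =ᵐ[ℙ] ℙ[B n | Finf (n + 1)] - ℙ[R' n * D | Finf (n + 1)] :=
              condExp_sub (hBint n) hR'Dint _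
          _ =ᵐ[ℙ] U (n + 1) := by
              filter_upwards [hcB, hcR'D, hstrict n] with ω h1 h2 h3
              have hne : US n ω - LS n ω ≠ 0 := by
                simp only [hLS, hUS]; exact sub_ne_zero.mpr (ne_of_gt h3)
              rw [Pi.sub_apply, h1, h2, hR']
              rw [div_mul_cancel₀ _ hne]
              ring
  -- expectations
  have hEA : ∀ n, ∫ ω, A n ω ∂ℙ = ∫ ω, L n ω ∂ℙ := by
    intro n
    rw [← integral_condExp (hFinfle n) (μ := ℙ) (f := A n)]
    exact integral_congr_ae (hcond n).1
  have hEB : ∀ n, ∫ ω, B n ω ∂ℙ = ∫ ω, U n ω ∂ℙ := by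
    intro n
    rw [← integral_condExp (hFinfle n) (μ := ℙ) (f := B n)]
    exact integral_congr_ae (hcond n).2
  -- A, B are a.e. versions of Lt, Ut
  have hLtA : ∀ n, Lt n =ᵐ[ℙ] A n ∧ Ut n =ᵐ[ℙ] B n := by
    intro n; induction n with
    | zero =>
      exact ⟨Eventually.of_forall fun ω => by rw [hLt0 ω, hA0],
        Eventually.of_forall fun ω => by rw [hUt0 ω, hB0]⟩
    | succ n ih =>
      constructor
      · filter_upwards [hLtrec n, ih.1, ih.2] with ω h1 h2 h3
        rw [h1, hArec n, h2, h3]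
      · filter_upwards [hUtrec n, ih.1, ih.2] with ω h1 h2 h3
        rw [h1, hBrec n, h2, h3]
  -- independence of A n (resp. B n) and G
  have hcomap : Finf 0 ≤ MeasurableSpace.comap (fun ω => fun n => (L n ω, U n ω))
      inferInstance := by
    rw [hFinf 0]
    refine iSup₂_le fun k _ => ?_
    rw [hF k]
    have : (fun ω => (L k ω, U k ω))
        = (fun p : ℕ → ℝ × ℝ => p k) ∘ (fun ω => fun n => (L n ω, U n ω)) := rfl
    rw [this, ← MeasurableSpace.comap_comp]
    exact MeasurableSpace.comap_mono (measurable_iff_comap_le.mp (measurable_pi_apply k))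
  have hindA : ∀ n, IndepFun (A n) G ℙ :=
    fun n => aux_indep hindep ((hABm n).1.mono hcomap le_rfl)
  have hindB : ∀ n, IndepFun (B n) G ℙ :=
    fun n => aux_indep hindep ((hABm n).2.mono hcomap le_rfl)
  -- probabilities
  have hPA : ∀ n, ℙ {ω | G ω ≤ A n ω} = ENNReal.ofReal (∫ ω, L n ω ∂ℙ) := by
    intro n
    rw [← hEA n]
    refine aux_le_prob (hAm n) hGm hGlaw (hindA n) ?_
    filter_upwards [hbnd n] with ω ⟨h1, h2, h3⟩ using ⟨h1, by linarith⟩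
  have hPB : ∀ n, ℙ {ω | G ω ≤ B n ω} = ENNReal.ofReal (∫ ω, U n ω ∂ℙ) := by
    intro n
    rw [← hEB n]
    refine aux_le_prob (hBm n) hGm hGlaw (hindB n) ?_
    filter_upwards [hbnd n] with ω ⟨h1, h2, h3⟩ using ⟨by linarith, h3⟩
  have hl0 : ∀ n, 0 ≤ ∫ ω, L n ω ∂ℙ := by
    intro n
    refine integral_nonneg_of_ae ?_
    filter_upwards [h_as n] with ω h using h.2.1.1
  constructor
  · -- first claim
    set Ω₀ : Set Ω := {ω | (∀ n, A n ω ≤ A (n + 1) ω) ∧ (∀ n, Lt n ω = A n ω)} with hΩ₀def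
    have hΩ₀ : ∀ᵐ ω ∂ℙ, ω ∈ Ω₀ := by
      have h1 : ∀ᵐ ω ∂ℙ, ∀ n, A n ω ≤ A (n + 1) ω := by
        rw [ae_all_iff]
        intro n
        filter_upwards [hbnd n, hgood n] with ω ⟨h1, h2, h3⟩ ⟨g1, g2, g3⟩
        simp only [hArec]; nlinarith
      have h2 : ∀ᵐ ω ∂ℙ, ∀ n, Lt n ω = A n ω := by
        rw [ae_all_iff]; exact fun n => (hLtA n).1
      filter_upwards [h1, h2] with ω ha hb using ⟨ha, hb⟩
    set C : ℕ → Set Ω := fun n => {ω | G ω ≤ A n ω} ∩ Ω₀ with hCdef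
    have hCmono : Monotone C := by
      refine monotone_nat_of_le_succ fun n ω hω => ?_
      exact ⟨le_trans hω.1 (hω.2.1 n), hω.2⟩
    have hCP : ∀ n, ℙ (C n) = ENNReal.ofReal (∫ ω, L n ω ∂ℙ) := by
      intro n
      rw [← hPA n]
      refine measure_congr (eventuallyEq_set.mpr ?_)
      filter_upwards [hΩ₀] with ω hω
      simp only [hCdef, Set.mem_inter_iff, Set.mem_setOf_eq]
      exact ⟨fun h => h.1, fun h => ⟨h, hω⟩⟩
    have hSU : ℙ {ω | ∃ n, G ω ≤ Lt n ω} = ℙ (⋃ n, C n) := by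
      refine measure_congr (eventuallyEq_set.mpr ?_)
      filter_upwards [hΩ₀] with ω hω
      simp only [Set.mem_setOf_eq, Set.mem_iUnion, hCdef, Set.mem_inter_iff]
      constructor
      · rintro ⟨n, hn⟩
        exact ⟨n, ⟨by rw [← hω.2 n]; exact hn, hω⟩⟩
      · rintro ⟨n, hn, -⟩
        exact ⟨n, by rw [hω.2 n]; exact hn⟩
    have htend : Tendsto (fun n => ℙ (C n)) atTop (nhds (ℙ (⋃ n, C n))) :=
      tendsto_measure_iUnion_atTop hCmono
    have htend' : Tendsto (fun n => ℙ (C n)) atTop (nhds (ENNReal.ofReal s)) := by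
      have : (fun n => ℙ (C n)) = fun n => ENNReal.ofReal (∫ ω, L n ω ∂ℙ) := funext hCP
      rw [this]
      exact (ENNReal.continuous_ofReal.tendsto s).comp hltend
    rw [hSU, tendsto_nhds_unique htend htend']
  · -- second claim
    intro n
    have hsets : ℙ {ω | Lt n ω < G ω ∧ G ω ≤ Ut n ω}
        = ℙ ({ω | G ω ≤ B n ω} \ {ω | G ω ≤ A n ω}) := by
      refine measure_congr (eventuallyEq_set.mpr ?_)
      filter_upwards [(hLtA n).1, (hLtA n).2] with ω h1 h2
      simp only [Set.mem_setOf_eq, Set.mem_diff, not_le, h1, h2]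
      tauto
    have hAB : {ω | G ω ≤ B n ω} \ {ω | G ω ≤ A n ω}
        = {ω | G ω ≤ B n ω} \ ({ω | G ω ≤ A n ω} ∩ {ω | G ω ≤ B n ω}) := by
      rw [Set.diff_inter_self_eq_diff]
    have hmeasA : MeasurableSet ({ω | G ω ≤ A n ω} ∩ {ω | G ω ≤ B n ω}) :=
      (measurableSet_le hGm (hAm n)).inter (measurableSet_le hGm (hBm n))
    have hinterA : ℙ ({ω | G ω ≤ A n ω} ∩ {ω | G ω ≤ B n ω}) = ℙ {ω | G ω ≤ A n ω} := by
      refine measure_congr (eventuallyEq_set.mpr ?_)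
      filter_upwards [hbnd n] with ω ⟨h1, h2, h3⟩
      simp only [Set.mem_inter_iff, Set.mem_setOf_eq]
      exact ⟨fun h => h.1, fun h => ⟨h, le_trans h h2⟩⟩
    rw [hsets, hAB, measure_diff Set.inter_subset_right hmeasA.nullMeasurableSet
      (measure_ne_top _ _), hinterA, hPA n, hPB n,
      ENNReal.ofReal_sub _ (hl0 n)]
end

section
/- Let p ∈ (0,1), let X_1, X_2, … be independent Bernoulli(p) random variables, and set H_n = X_1 + ⋯ + X_n. Let real coefficients a(n,k), 0 ≤ k ≤ n, satisfy, for all m < n and 0 ≤ k ≤ n, a(n,k) ≥ Σ_{i=0}^{k} [C(n−m, k−i)·C(m, i)/C(n, k)]·a(m, i). Then for all m < n, E(a(m, H_m) | σ(H_n, H_{n+1}, …)) = E(a(m, H_m) | σ(H_n)) ≤ a(n, H_n) almost surely; that is, L_n := a(n, H_n) is a reverse time supermartingale with respect to the reversed filtration generated by (H_n, H_{n+1}, …). -/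
open MeasureTheory ProbabilityTheory Set Finset

section helpers
variable {Ω : Type*}



variable {Ω : Type*}

lemma aux_sup_eq_generateFrom (m₁ m₂ : MeasurableSpace Ω) :
    m₁ ⊔ m₂ = MeasurableSpace.generateFrom
      {s | ∃ s₁ s₂, MeasurableSet[m₁] s₁ ∧ MeasurableSet[m₂] s₂ ∧ s = s₁ ∩ s₂} := by
  apply le_antisymm
  · refine sup_le ?_ ?_
    · intro s hs
      exact MeasurableSpace.measurableSet_generateFrom
        ⟨s, Set.univ, hs, MeasurableSet.univ, (Set.inter_univ s).symm⟩
    · intro s hs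
      exact MeasurableSpace.measurableSet_generateFrom
        ⟨Set.univ, s, MeasurableSet.univ, hs, (Set.univ_inter s).symm⟩
  · refine MeasurableSpace.generateFrom_le ?_
    rintro s ⟨s₁, s₂, h₁, h₂, rfl⟩
    exact ((le_sup_left : m₁ ≤ m₁ ⊔ m₂) _ h₁).inter ((le_sup_right : m₂ ≤ m₁ ⊔ m₂) _ h₂)

lemma aux_pi_system (m₁ m₂ : MeasurableSpace Ω) :
    IsPiSystem {s : Set Ω | ∃ s₁ s₂, MeasurableSet[m₁] s₁ ∧ MeasurableSet[m₂] s₂ ∧ s = s₁ ∩ s₂} := by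
  rintro s ⟨s₁, s₂, h₁, h₂, rfl⟩ t ⟨t₁, t₂, g₁, g₂, rfl⟩ -
  exact ⟨s₁ ∩ t₁, s₂ ∩ t₂, h₁.inter g₁, h₂.inter g₂, by ext x; simp; tauto⟩

lemma aux_setIntegral_indep {mX m₂ : MeasurableSpace Ω} [m0 : MeasurableSpace Ω]
    {μ : Measure Ω} [IsProbabilityMeasure μ] (hXle : mX ≤ m0) (h2 : m₂ ≤ m0) (hind : Indep mX m₂ μ)
    {φ : Ω → ℝ} (hφ : StronglyMeasurable[mX] φ) (hφi : Integrable φ μ) {t : Set Ω}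
    (ht : MeasurableSet[m₂] t) :
    ∫ x in t, φ x ∂μ = (μ t).toReal * ∫ x, φ x ∂μ := by
  have h := condExp_indep_eq hXle h2 hφ hind
  calc ∫ x in t, φ x ∂μ = ∫ x in t, (μ[φ|m₂]) x ∂μ := (setIntegral_condExp h2 hφi ht).symm
    _ = ∫ _ in t, (∫ x, φ x ∂μ) ∂μ := integral_congr_ae (ae_restrict_of_ae h)
    _ = (μ t).toReal * ∫ x, φ x ∂μ := by simp [Measure.real]

lemma aux_condexp_sup {mX m₁ m₂ : MeasurableSpace Ω} [m0 : MeasurableSpace Ω]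
    {μ : Measure Ω} [IsProbabilityMeasure μ] (hXle : mX ≤ m0) (h2 : m₂ ≤ m0) (h1X : m₁ ≤ mX)
    (hind : Indep mX m₂ μ) {f : Ω → ℝ} (hf : StronglyMeasurable[mX] f)
    (hfi : Integrable f μ) : μ[f | m₁ ⊔ m₂] =ᵐ[μ] μ[f | m₁] := by
  have h1 : m₁ ≤ m0 := h1X.trans hXle
  have hsup : m₁ ⊔ m₂ ≤ m0 := sup_le h1 h2
  have key : ∀ s : Set Ω, MeasurableSet[m₁ ⊔ m₂] s →
      ∫ x in s, (μ[f|m₁]) x ∂μ = ∫ x in s, f x ∂μ := by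
    refine MeasurableSpace.induction_on_inter (m := m₁ ⊔ m₂) (aux_sup_eq_generateFrom m₁ m₂)
      (aux_pi_system m₁ m₂) (by simp) ?_ ?_ ?_
    · rintro s ⟨s₁, s₂, h₁, h₂, rfl⟩
      have hs₁ : MeasurableSet[m0] s₁ := h1 _ h₁
      have e1 : ∫ x in s₁ ∩ s₂, f x ∂μ = (μ s₂).toReal * ∫ x in s₁, f x ∂μ := by
        rw [Set.inter_comm s₁ s₂, ← setIntegral_indicator hs₁,
          aux_setIntegral_indep hXle h2 hind (hf.indicator (h1X _ h₁)) (hfi.indicator hs₁) h₂,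
          integral_indicator hs₁]
      have e2 : ∫ x in s₁ ∩ s₂, (μ[f|m₁]) x ∂μ = (μ s₂).toReal * ∫ x in s₁, (μ[f|m₁]) x ∂μ := by
        rw [Set.inter_comm s₁ s₂, ← setIntegral_indicator hs₁,
          aux_setIntegral_indep hXle h2 hind
            ((stronglyMeasurable_condExp.mono h1X).indicator (h1X _ h₁))
            (integrable_condExp.indicator hs₁) h₂,
          integral_indicator hs₁]
      rw [e1, e2, setIntegral_condExp h1 hfi h₁]
    · intro t ht ih
      have ht' : MeasurableSet t := hsup _ ht
      have h_tot : ∫ x, (μ[f|m₁]) x ∂μ = ∫ x, f x ∂μ := integral_condExp (μ := μ) (f := f) h1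
      have a1 := integral_add_compl ht' integrable_condExp (f := μ[f|m₁]) (μ := μ)
      have a2 := integral_add_compl ht' hfi (f := f) (μ := μ)
      linarith
    · intro g hdisj hmeas ih
      have hg : ∀ i, MeasurableSet (g i) := fun i => hsup _ (hmeas i)
      rw [integral_iUnion hg hdisj integrable_condExp.integrableOn,
        integral_iUnion hg hdisj hfi.integrableOn]
      exact tsum_congr ih
  exact (ae_eq_condExp_of_forall_setIntegral_eq hsup hfi
    (fun s _ _ => integrable_condExp.integrableOn) (fun s hs _ => key s hs)
    (((stronglyMeasurable_condExp (m := m₁) (f := f) (μ := μ)).mono (le_sup_left : m₁ ≤ m₁ ⊔ m₂)).aestronglyMeasurable)).symm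



variable {Ω : Type*}

lemma aux_pascal {p : ℝ} (hp0 : 0 ≤ p) (c k : ℕ) :
    (c.choose (k+1) : ℝ) * p^(k+1) * (1-p)^(c-(k+1)) * (1-p)
      + (c.choose k : ℝ) * p^k * (1-p)^(c-k) * p
    = ((c+1).choose (k+1) : ℝ) * p^(k+1) * (1-p)^(c-k) := by
  by_cases h : k < c
  · have e : (1-p)^(c-k) = (1-p)^(c-(k+1)) * (1-p) := by
      rw [← pow_succ]; congr 1; omega
    rw [Nat.choose_succ_succ (c) (k)]
    push_cast
    rw [e]; ring
  · have h1 : c.choose (k+1) = 0 := Nat.choose_eq_zero_of_lt (by omega)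
    have h2 : (c+1).choose (k+1) = c.choose k := by
      rcases eq_or_lt_of_le (not_lt.mp h) with h' | h'
      · rw [← h']; simp [Nat.choose_self]
      · rw [Nat.choose_eq_zero_of_lt (by omega), Nat.choose_eq_zero_of_lt (by omega)]
    have e0 : c - k = 0 := by omega
    rw [h1, h2, e0]
    push_cast; ring

lemma aux_binom [m0 : MeasureSpace Ω] [IsProbabilityMeasure (ℙ : Measure Ω)]
    {p : ℝ} (hp : p ∈ Set.Ioo (0 : ℝ) 1)
    {X : ℕ → Ω → ℕ} (hXm : ∀ i, Measurable (X i))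
    (hindep : iIndepFun X ℙ)
    (hbern : ∀ i, ℙ {ω | X i ω = 1} = ENNReal.ofReal p ∧
      ℙ {ω | X i ω = 0} = ENNReal.ofReal (1 - p)) :
    ∀ (s : Finset ℕ) (k : ℕ),
      ℙ {ω | ∑ j ∈ s, X j ω = k} =
        ENNReal.ofReal ((s.card.choose k : ℝ) * p^k * (1-p)^(s.card - k)) := by
  have hp0 : 0 ≤ p := le_of_lt hp.1
  have hq0 : 0 ≤ 1 - p := by linarith [hp.2]
  have hbr : ∀ c k : ℕ, 0 ≤ (c.choose k : ℝ) * p^k * (1-p)^(c-k) := fun c k =>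
    mul_nonneg (mul_nonneg (Nat.cast_nonneg _) (pow_nonneg hp0 _)) (pow_nonneg hq0 _)
  intro s
  induction s using Finset.induction_on with
  | empty =>
    intro k
    rcases k with _ | k
    · simp
    · simp [Nat.choose_eq_zero_of_lt]
  | insert i s hi ih =>
    intro k
    set S : Ω → ℕ := fun ω => ∑ j ∈ s, X j ω with hS
    have hSm : Measurable S := Finset.measurable_sum _ fun j _ => hXm j
    have hIF : IndepFun S (X i) ℙ := by
      have h := hindep.indepFun_finset_sum_of_notMem hXm hi
      have e : (∑ j ∈ s, X j) = S := by ext ω; simp [hS, Finset.sum_apply]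
      rwa [e] at h
    -- the event up to null sets
    have hnull : ℙ ({ω | X i ω = 0} ∪ {ω | X i ω = 1})ᶜ = 0 := by
      have hdis : Disjoint {ω | X i ω = 0} {ω | X i ω = 1} := by
        rw [Set.disjoint_left]; intro ω h0 h1; simp at h0 h1; omega
      have hm1 : MeasurableSet {ω | X i ω = 1} := hXm i (measurableSet_singleton 1)
      have hu : ℙ ({ω | X i ω = 0} ∪ {ω | X i ω = 1}) = 1 := by
        rw [measure_union hdis hm1, (hbern i).1, (hbern i).2,
          ← ENNReal.ofReal_add hq0 hp0]
        norm_num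
      have hm0 : MeasurableSet {ω | X i ω = 0} := hXm i (measurableSet_singleton 0)
      rw [measure_compl (hm0.union hm1) (by simp), hu]
      simp
    have hmain : ℙ {ω | X i ω + S ω = k}
        = ℙ ({ω | X i ω + S ω = k} ∩ ({ω | X i ω = 0} ∪ {ω | X i ω = 1})) :=
      (measure_inter_conull hnull).symm
    have hins : ℙ {ω | ∑ j ∈ insert i s, X j ω = k} = ℙ {ω | X i ω + S ω = k} := by
      congr 1; ext ω; simp [Finset.sum_insert hi, hS]
    have hcard : (insert i s).card = s.card + 1 := Finset.card_insert_of_notMem hi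
    set c := s.card with hc
    rcases k with _ | k
    · -- k = 0
      have e : {ω | X i ω + S ω = 0} ∩ ({ω | X i ω = 0} ∪ {ω | X i ω = 1})
          = S ⁻¹' {0} ∩ (X i) ⁻¹' {0} := by
        ext ω; simp only [Set.mem_inter_iff, Set.mem_union, Set.mem_setOf_eq,
          Set.mem_preimage, Set.mem_singleton_iff]
        omega
      rw [hins, hmain, e, hIF.measure_inter_preimage_eq_mul _ _ (measurableSet_singleton 0)
        (measurableSet_singleton 0)]
      have e1 : S ⁻¹' {0} = {ω | S ω = 0} := rfl
      have e2 : (X i) ⁻¹' {0} = {ω | X i ω = 0} := rfl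
      rw [e1, e2, ih 0, (hbern i).2, ← ENNReal.ofReal_mul (hbr c 0), hcard]
      congr 1
      simp [pow_succ]
    · -- k = k+1
      have e : {ω | X i ω + S ω = k + 1} ∩ ({ω | X i ω = 0} ∪ {ω | X i ω = 1})
          = (S ⁻¹' {k+1} ∩ (X i) ⁻¹' {0}) ∪ (S ⁻¹' {k} ∩ (X i) ⁻¹' {1}) := by
        ext ω; simp only [Set.mem_inter_iff, Set.mem_union, Set.mem_setOf_eq,
          Set.mem_preimage, Set.mem_singleton_iff]
        omega
      have hdis2 : Disjoint (S ⁻¹' {k+1} ∩ (X i) ⁻¹' {0}) (S ⁻¹' {k} ∩ (X i) ⁻¹' {1}) := by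
        rw [Set.disjoint_left]; rintro ω ⟨-, h0⟩ ⟨-, h1⟩
        simp at h0 h1; omega
      have hm2 : MeasurableSet (S ⁻¹' {k} ∩ (X i) ⁻¹' {1}) :=
        (hSm (measurableSet_singleton k)).inter (hXm i (measurableSet_singleton 1))
      rw [hins, hmain, e, measure_union hdis2 hm2,
        hIF.measure_inter_preimage_eq_mul _ _ (measurableSet_singleton (k+1))
          (measurableSet_singleton 0),
        hIF.measure_inter_preimage_eq_mul _ _ (measurableSet_singleton k)
          (measurableSet_singleton 1)]
      have e1 : ∀ j : ℕ, S ⁻¹' {j} = {ω | S ω = j} := fun j => rfl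
      have e2 : (X i) ⁻¹' {0} = {ω | X i ω = 0} := rfl
      have e3 : (X i) ⁻¹' {1} = {ω | X i ω = 1} := rfl
      rw [e1, e1, e2, e3, ih (k+1), ih k, (hbern i).1, (hbern i).2, hcard,
        ← ENNReal.ofReal_mul (hbr c (k+1)), ← ENNReal.ofReal_mul (hbr c k),
        ← ENNReal.ofReal_add (mul_nonneg (hbr c (k+1)) hq0) (mul_nonneg (hbr c k) hp0)]
      congr 1
      have := aux_pascal hp0 c k
      have ec : c + 1 - (k + 1) = c - k := by omega
      rw [ec]
      linarith [aux_pascal hp0 c k]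



lemma aux_bern_null [m0 : MeasureSpace Ω] [IsProbabilityMeasure (ℙ : Measure Ω)]
    {p : ℝ} (hp : p ∈ Set.Ioo (0 : ℝ) 1)
    {X : ℕ → Ω → ℕ} (hXm : ∀ i, Measurable (X i))
    (hbern : ∀ i, ℙ {ω | X i ω = 1} = ENNReal.ofReal p ∧
      ℙ {ω | X i ω = 0} = ENNReal.ofReal (1 - p)) (i : ℕ) :
    ℙ ({ω | X i ω = 0} ∪ {ω | X i ω = 1})ᶜ = 0 := by
  have hp0 : 0 ≤ p := le_of_lt hp.1
  have hq0 : 0 ≤ 1 - p := by linarith [hp.2]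
  have hdis : Disjoint {ω | X i ω = 0} {ω | X i ω = 1} := by
    rw [Set.disjoint_left]; intro ω h0 h1; simp at h0 h1; omega
  have hm1 : MeasurableSet {ω | X i ω = 1} := hXm i (measurableSet_singleton 1)
  have hm0 : MeasurableSet {ω | X i ω = 0} := hXm i (measurableSet_singleton 0)
  have hu : ℙ ({ω | X i ω = 0} ∪ {ω | X i ω = 1}) = 1 := by
    rw [measure_union hdis hm1, (hbern i).1, (hbern i).2, ← ENNReal.ofReal_add hq0 hp0]
    norm_num
  rw [measure_compl (hm0.union hm1) (by simp), hu]
  simp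

end helpers

/-- if the coefficients `a n k` satisfy the Nacu–Peres inequality (condition
(iii) of Proposition 1), then `L n = a n (H n)` is a reverse time supermartingale with
respect to the reversed filtration generated by `(H n, H (n+1), …)`. -/
theorem stmt_9 {Ω : Type*} [MeasureSpace Ω] [IsProbabilityMeasure (ℙ : Measure Ω)]
    (p : ℝ) (hp : p ∈ Ioo (0 : ℝ) 1)
    (X : ℕ → Ω → ℕ) (hXm : ∀ i, Measurable (X i))
    (hindep : iIndepFun X ℙ)
    (hbern : ∀ i, ℙ {ω | X i ω = 1} = ENNReal.ofReal p ∧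
      ℙ {ω | X i ω = 0} = ENNReal.ofReal (1 - p))
    (H : ℕ → Ω → ℕ) (hH : ∀ n ω, H n ω = ∑ j ∈ range n, X j ω)
    (a : ℕ → ℕ → ℝ)
    (hcoef : ∀ m n : ℕ, m < n → ∀ k : ℕ, k ≤ n →
      (∑ i ∈ range (k + 1),
        (((n - m).choose (k - i) : ℝ) * (m.choose i : ℝ) / (n.choose k : ℝ)) * a m i)
        ≤ a n k) :
    ∀ m n : ℕ, m < n →
      (ℙ[(fun ω => a m (H m ω)) | ⨆ j, ⨆ _ : n ≤ j,
          MeasurableSpace.comap (H j) inferInstance] =ᵐ[ℙ]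
        ℙ[(fun ω => a m (H m ω)) | MeasurableSpace.comap (H n) inferInstance]) ∧
      ℙ[(fun ω => a m (H m ω)) | MeasurableSpace.comap (H n) inferInstance] ≤ᵐ[ℙ]
        fun ω => a n (H n ω) := by
  intro m n hmn
  have hp0 : 0 ≤ p := le_of_lt hp.1
  have hq0 : 0 ≤ 1 - p := by linarith [hp.2]
  have hbr : ∀ c k : ℕ, 0 ≤ (c.choose k : ℝ) * p^k * (1-p)^(c-k) := fun c k =>
    mul_nonneg (mul_nonneg (Nat.cast_nonneg _) (pow_nonneg hp0 _)) (pow_nonneg hq0 _)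
  have hHm : ∀ j, Measurable (H j) := by
    intro j
    have e : (fun ω => ∑ i ∈ range j, X i ω) = H j := funext fun ω => (hH j ω).symm
    rw [← e]
    exact Finset.measurable_sum _ fun i _ => hXm i
  set f : Ω → ℝ := fun ω => a m (H m ω) with hf_def
  set g : ℕ → ℝ := fun k => ∑ i ∈ range (k + 1),
    (((n - m).choose (k - i) : ℝ) * (m.choose i : ℝ) / (n.choose k : ℝ)) * a m i with hg_def
  set Gn : Ω → ℝ := fun ω => g (H n ω) with hGn_def
  set B : Ω → ℕ := fun ω => ∑ j ∈ Finset.Ico m n, X j ω with hB_def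
  -- distributions
  have hdistHn : ∀ k, ℙ ((H n) ⁻¹' {k})
      = ENNReal.ofReal ((n.choose k : ℝ) * p^k * (1-p)^(n-k)) := by
    intro k
    have e : (H n) ⁻¹' {k} = {ω | ∑ j ∈ range n, X j ω = k} := by
      ext ω; simp [hH n ω]
    rw [e, aux_binom hp hXm hindep hbern (range n) k, Finset.card_range]
  have hdistHm : ∀ i, ℙ ((H m) ⁻¹' {i})
      = ENNReal.ofReal ((m.choose i : ℝ) * p^i * (1-p)^(m-i)) := by
    intro i
    have e : (H m) ⁻¹' {i} = {ω | ∑ j ∈ range m, X j ω = i} := by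
      ext ω; simp [hH m ω]
    rw [e, aux_binom hp hXm hindep hbern (range m) i, Finset.card_range]
  have hdistB : ∀ j, ℙ (B ⁻¹' {j})
      = ENNReal.ofReal (((n-m).choose j : ℝ) * p^j * (1-p)^((n-m)-j)) := by
    intro j
    have e : B ⁻¹' {j} = {ω | ∑ i ∈ Finset.Ico m n, X i ω = j} := by
      ext ω; simp [hB_def]
    rw [e, aux_binom hp hXm hindep hbern (Finset.Ico m n) j, Nat.card_Ico]
  have hsplit : ∀ ω, H n ω = H m ω + B ω := by
    intro ω
    rw [hH n ω, hH m ω, hB_def]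
    exact (Finset.sum_range_add_sum_Ico _ (le_of_lt hmn)).symm
  -- independence of H m and B
  have hABindep : IndepFun (H m) B ℙ := by
    have hdisj : Disjoint (range m) (Finset.Ico m n) := by
      rw [Finset.disjoint_left]
      intro x hx hx'
      simp only [Finset.mem_range, Finset.mem_Ico] at hx hx'
      omega
    have base := hindep.indepFun_finset (range m) (Finset.Ico m n) hdisj hXm
    have hφ1 : Measurable (fun v : ((i : (range m : Finset ℕ)) → ℕ) => ∑ i, v i) :=
      Finset.measurable_sum _ fun i _ => measurable_pi_apply i
    have hφ2 : Measurable (fun v : ((i : (Finset.Ico m n : Finset ℕ)) → ℕ) => ∑ i, v i) :=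
      Finset.measurable_sum _ fun i _ => measurable_pi_apply i
    have h2 := base.comp hφ1 hφ2
    have e1 : (fun ω => ∑ i : (range m : Finset ℕ), X i ω) = H m := by
      funext ω; rw [hH m ω]; exact Finset.sum_coe_sort (range m) (fun j => X j ω)
    have e2 : (fun ω => ∑ i : (Finset.Ico m n : Finset ℕ), X i ω) = B := by
      funext ω; exact Finset.sum_coe_sort (Finset.Ico m n) (fun j => X j ω)
    rw [← e1, ← e2]
    exact h2
  -- joint distribution
  have hjoint : ∀ i k : ℕ, i ≤ k → k ≤ n →
      ℙ ((H m) ⁻¹' {i} ∩ (H n) ⁻¹' {k})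
        = ENNReal.ofReal (((m.choose i : ℝ) * ((n-m).choose (k-i) : ℝ))
            * (p^k * (1-p)^(n-k))) := by
    intro i k hik hkn
    have e : (H m) ⁻¹' {i} ∩ (H n) ⁻¹' {k} = (H m) ⁻¹' {i} ∩ B ⁻¹' {k - i} := by
      ext ω
      simp only [Set.mem_inter_iff, Set.mem_preimage, Set.mem_singleton_iff]
      have := hsplit ω
      omega
    rw [e, hABindep.measure_inter_preimage_eq_mul _ _ (measurableSet_singleton i)
      (measurableSet_singleton (k-i)), hdistHm i, hdistB (k-i),
      ← ENNReal.ofReal_mul (hbr m i)]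
    congr 1
    by_cases him : i ≤ m
    · by_cases hki : k - i ≤ n - m
      · have e1 : p^i * p^(k-i) = p^k := by rw [← pow_add, show i + (k-i) = k by omega]
        have e2 : (1-p)^(m-i) * (1-p)^((n-m)-(k-i)) = (1-p)^(n-k) := by
          rw [← pow_add, show (m-i) + ((n-m)-(k-i)) = n-k by omega]
        calc (m.choose i : ℝ) * p^i * (1-p)^(m-i)
              * (((n-m).choose (k-i) : ℝ) * p^(k-i) * (1-p)^((n-m)-(k-i)))
            = ((m.choose i : ℝ) * ((n-m).choose (k-i) : ℝ))
              * ((p^i * p^(k-i)) * ((1-p)^(m-i) * (1-p)^((n-m)-(k-i)))) := by ring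
          _ = _ := by rw [e1, e2]
      · rw [Nat.choose_eq_zero_of_lt (show n - m < k - i by omega)]
        push_cast; ring
    · rw [Nat.choose_eq_zero_of_lt (by omega)]
      push_cast; ring
  -- a.e. bounds
  have haeX : ∀ᵐ ω ∂(ℙ : Measure Ω), ∀ j, X j ω ≤ 1 := by
    rw [ae_all_iff]
    intro j
    have hsub : {ω | ¬ X j ω ≤ 1} ⊆ ({ω | X j ω = 0} ∪ {ω | X j ω = 1})ᶜ := by
      intro ω hω
      simp only [Set.mem_setOf_eq, not_le] at hω
      simp only [Set.mem_compl_iff, Set.mem_union, Set.mem_setOf_eq]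
      omega
    exact measure_mono_null hsub (aux_bern_null hp hXm hbern j)
  have hHle : ∀ j : ℕ, ∀ᵐ ω ∂(ℙ : Measure Ω), H j ω ≤ j := by
    intro j
    filter_upwards [haeX] with ω hω
    rw [hH j ω]
    calc ∑ i ∈ range j, X i ω ≤ ∑ i ∈ range j, 1 := Finset.sum_le_sum fun i _ => hω i
      _ = j := by simp
  -- integrability
  have hf_meas : Measurable f := Measurable.of_discrete.comp (hHm m)
  have hf_int : Integrable f ℙ := by
    refine Integrable.mono' (integrable_const (∑ i ∈ range (m+1), |a m i|))
      hf_meas.aestronglyMeasurable ?_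
    filter_upwards [hHle m] with ω hω
    have : |a m (H m ω)| ≤ ∑ i ∈ range (m+1), |a m i| :=
      Finset.single_le_sum (f := fun i => |a m i|) (fun i _ => abs_nonneg _)
        (Finset.mem_range.mpr (by omega))
    simpa [hf_def] using this
  have hg_zero : ∀ k, n < k → g k = 0 := by
    intro k hk
    rw [hg_def]
    refine Finset.sum_eq_zero fun i _ => ?_
    rw [Nat.choose_eq_zero_of_lt hk]
    simp
  have hGn_meas : Measurable Gn := fun s _ => hHm n (MeasurableSet.of_discrete (s := g ⁻¹' s))
  have hGn_int : Integrable Gn ℙ := by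
    refine Integrable.mono' (integrable_const (∑ k ∈ range (n+1), |g k|))
      hGn_meas.aestronglyMeasurable (Filter.Eventually.of_forall fun ω => ?_)
    by_cases hc : H n ω ≤ n
    · have : |g (H n ω)| ≤ ∑ k ∈ range (n+1), |g k| :=
        Finset.single_le_sum (f := fun k => |g k|) (fun k _ => abs_nonneg _)
          (Finset.mem_range.mpr (by omega))
      simpa [hGn_def] using this
    · have : Gn ω = 0 := by rw [hGn_def]; exact hg_zero _ (by omega)
      rw [Real.norm_eq_abs, this]
      simp only [abs_zero]
      exact Finset.sum_nonneg fun k _ => abs_nonneg _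
  -- per-k set integrals
  have hintEq : ∀ k : ℕ, ∫ ω in (H n) ⁻¹' {k}, f ω ∂ℙ = ∫ ω in (H n) ⁻¹' {k}, Gn ω ∂ℙ := by
    intro k
    by_cases hkn : k ≤ n
    · -- decompose by the value of H m
      have hTsub : (H n) ⁻¹' {k} = ⋃ i ∈ range (k+1), ((H m) ⁻¹' {i} ∩ (H n) ⁻¹' {k}) := by
        ext ω
        simp only [Set.mem_preimage, Set.mem_singleton_iff, Set.mem_iUnion,
          Finset.mem_range, Set.mem_inter_iff]
        constructor
        · intro hω
          exact ⟨H m ω, by have := hsplit ω; omega, rfl, hω⟩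
        · rintro ⟨i, -, -, hω⟩; exact hω
      have hmeas : ∀ i ∈ range (k+1), MeasurableSet ((H m) ⁻¹' {i} ∩ (H n) ⁻¹' {k}) :=
        fun i _ => ((hHm m) (measurableSet_singleton i)).inter
          ((hHm n) (measurableSet_singleton k))
      have hdisj : Set.Pairwise ↑(range (k+1))
          (Function.onFun Disjoint fun i => (H m) ⁻¹' {i} ∩ (H n) ⁻¹' {k}) := by
        intro i _ j _ hij
        simp only [Function.onFun]
        rw [Set.disjoint_left]
        rintro ω ⟨h1, -⟩ ⟨h2, -⟩
        simp only [Set.mem_preimage, Set.mem_singleton_iff] at h1 h2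
        exact hij (h1 ▸ h2 ▸ rfl)
      have hintf : ∀ i ∈ range (k+1),
          ∫ ω in ((H m) ⁻¹' {i} ∩ (H n) ⁻¹' {k}), f ω ∂ℙ
            = (((m.choose i : ℝ) * ((n-m).choose (k-i) : ℝ)) * (p^k * (1-p)^(n-k)))
              * a m i := by
        intro i hi
        have hconst : ∀ ω ∈ (H m) ⁻¹' {i} ∩ (H n) ⁻¹' {k}, f ω = a m i := by
          rintro ω ⟨h1, -⟩
          simp only [Set.mem_preimage, Set.mem_singleton_iff] at h1
          rw [hf_def]; simp [h1]
        rw [setIntegral_congr_fun (hmeas i hi) hconst, setIntegral_const, Measure.real,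
          hjoint i k (by simpa using Nat.lt_succ_iff.mp (Finset.mem_range.mp hi)) hkn,
          ENNReal.toReal_ofReal (mul_nonneg
            (mul_nonneg (Nat.cast_nonneg _) (Nat.cast_nonneg _))
            (mul_nonneg (pow_nonneg hp0 _) (pow_nonneg hq0 _))), smul_eq_mul]
      have hintG : ∫ ω in (H n) ⁻¹' {k}, Gn ω ∂ℙ
          = g k * ((n.choose k : ℝ) * p^k * (1-p)^(n-k)) := by
        have hconst : ∀ ω ∈ (H n) ⁻¹' {k}, Gn ω = g k := by
          intro ω hω
          simp only [Set.mem_preimage, Set.mem_singleton_iff] at hω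
          rw [hGn_def]; simp [hω]
        rw [setIntegral_congr_fun ((hHm n) (measurableSet_singleton k)) hconst,
          setIntegral_const, Measure.real, hdistHn k, ENNReal.toReal_ofReal (hbr n k), smul_eq_mul,
          mul_comm]
      calc ∫ ω in (H n) ⁻¹' {k}, f ω ∂ℙ
          = ∑ i ∈ range (k+1), ∫ ω in ((H m) ⁻¹' {i} ∩ (H n) ⁻¹' {k}), f ω ∂ℙ := by
            conv_lhs => rw [hTsub]
            exact integral_biUnion_finset (range (k+1)) hmeas hdisj
              fun i _ => hf_int.integrableOn
        _ = ∑ i ∈ range (k+1),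
            (((m.choose i : ℝ) * ((n-m).choose (k-i) : ℝ)) * (p^k * (1-p)^(n-k))) * a m i :=
            Finset.sum_congr rfl hintf
        _ = g k * ((n.choose k : ℝ) * p^k * (1-p)^(n-k)) := by
            rw [hg_def, Finset.sum_mul]
            refine Finset.sum_congr rfl fun i _ => ?_
            have hCnk : (n.choose k : ℝ) ≠ 0 := Nat.cast_ne_zero.mpr (Nat.choose_pos hkn).ne'
            field_simp
        _ = ∫ ω in (H n) ⁻¹' {k}, Gn ω ∂ℙ := hintG.symm
    · -- k > n : the set is null
      have hnull : ℙ ((H n) ⁻¹' {k}) = 0 := by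
        rw [hdistHn k, Nat.choose_eq_zero_of_lt (by omega)]
        simp
      have hr : (ℙ : Measure Ω).restrict ((H n) ⁻¹' {k}) = 0 :=
        Measure.restrict_eq_zero.mpr hnull
      rw [hr]
      simp
  -- set-level integral equality for the σ-algebra generated by H n
  have hSet : ∀ s : Set Ω, MeasurableSet[MeasurableSpace.comap (H n) inferInstance] s →
      ∫ ω in s, Gn ω ∂ℙ = ∫ ω in s, f ω ∂ℙ := by
    rintro s ⟨S, -, rfl⟩
    have hU : (H n) ⁻¹' S = ⋃ k : ℕ, (H n) ⁻¹' (S ∩ {k}) := by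
      ext ω
      simp only [Set.mem_preimage, Set.mem_iUnion, Set.mem_inter_iff, Set.mem_singleton_iff]
      exact ⟨fun h => ⟨H n ω, h, rfl⟩, fun ⟨k, h, _⟩ => h⟩
    have hmeas : ∀ k : ℕ, MeasurableSet ((H n) ⁻¹' (S ∩ {k})) :=
      fun k => (hHm n) MeasurableSet.of_discrete
    have hdisj : Pairwise (Function.onFun Disjoint fun k : ℕ => (H n) ⁻¹' (S ∩ {k})) := by
      intro i j hij
      simp only [Function.onFun]
      rw [Set.disjoint_left]
      intro ω h1 h2
      simp only [Set.mem_preimage, Set.mem_inter_iff, Set.mem_singleton_iff] at h1 h2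
      exact hij (h1.2 ▸ h2.2 ▸ rfl)
    have hterm : ∀ k : ℕ, ∫ ω in (H n) ⁻¹' (S ∩ {k}), Gn ω ∂ℙ
        = ∫ ω in (H n) ⁻¹' (S ∩ {k}), f ω ∂ℙ := by
      intro k
      by_cases hk : k ∈ S
      · have : S ∩ {k} = {k} := by
          ext x; simp only [Set.mem_inter_iff, Set.mem_singleton_iff]
          exact ⟨fun h => h.2, fun h => ⟨h ▸ hk, h⟩⟩
        rw [this]
        exact (hintEq k).symm
      · have : S ∩ {k} = ∅ := by
          ext x; simp only [Set.mem_inter_iff, Set.mem_singleton_iff, Set.mem_empty_iff_false,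
            iff_false, not_and]
          rintro hx rfl; exact hk hx
        rw [this]
        simp
    rw [hU, integral_iUnion hmeas hdisj hGn_int.integrableOn,
      integral_iUnion hmeas hdisj hf_int.integrableOn]
    exact tsum_congr hterm
  -- Gn is a version of the conditional expectation given H n
  have hm₁le : MeasurableSpace.comap (H n) inferInstance ≤ (inferInstance : MeasurableSpace Ω) :=
    (hHm n).comap_le
  have hGn_sm : AEStronglyMeasurable[MeasurableSpace.comap (H n) inferInstance] Gn ℙ := by
    refine StronglyMeasurable.aestronglyMeasurable ?_
    refine Measurable.stronglyMeasurable ?_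
    exact fun s _ => ⟨g ⁻¹' s, MeasurableSet.of_discrete, rfl⟩
  have hcond : Gn =ᵐ[ℙ] ℙ[f | MeasurableSpace.comap (H n) inferInstance] :=
    ae_eq_condExp_of_forall_setIntegral_eq hm₁le hf_int
      (fun s _ _ => hGn_int.integrableOn) (fun s hs _ => hSet s hs) hGn_sm
  constructor
  · -- equality of conditional expectations
    have hXle : (⨆ (i : ℕ) (_ : i < n), MeasurableSpace.comap (X i) inferInstance)
        ≤ (inferInstance : MeasurableSpace Ω) := iSup₂_le fun i _ => (hXm i).comap_le
    have h2le : (⨆ (j : ℕ) (_ : n ≤ j), MeasurableSpace.comap (X j) inferInstance)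
        ≤ (inferInstance : MeasurableSpace Ω) := iSup₂_le fun j _ => (hXm j).comap_le
    have hXmX : ∀ i, i < n → Measurable[⨆ (i : ℕ) (_ : i < n),
        MeasurableSpace.comap (X i) inferInstance] (X i) := fun i hi =>
      measurable_iff_comap_le.mpr (le_iSup₂ (f := fun (i : ℕ) (_ : i < n) =>
        MeasurableSpace.comap (X i) inferInstance) i hi)
    have hXm₂ : ∀ j, n ≤ j → Measurable[⨆ (j : ℕ) (_ : n ≤ j),
        MeasurableSpace.comap (X j) inferInstance] (X j) := fun j hj =>
      measurable_iff_comap_le.mpr (le_iSup₂ (f := fun (j : ℕ) (_ : n ≤ j) =>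
        MeasurableSpace.comap (X j) inferInstance) j hj)
    have hHmX : ∀ j, j ≤ n → Measurable[⨆ (i : ℕ) (_ : i < n),
        MeasurableSpace.comap (X i) inferInstance] (H j) := by
      intro j hj
      have e : (fun ω => ∑ i ∈ range j, X i ω) = H j := funext fun ω => (hH j ω).symm
      rw [← e]
      exact Finset.measurable_sum _ fun i hi =>
        hXmX i (by have := Finset.mem_range.mp hi; omega)
    have h1X : MeasurableSpace.comap (H n) inferInstance
        ≤ ⨆ (i : ℕ) (_ : i < n), MeasurableSpace.comap (X i) inferInstance :=
      measurable_iff_comap_le.mp (hHmX n le_rfl)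
    have hind : Indep (⨆ (i : ℕ) (_ : i < n), MeasurableSpace.comap (X i) inferInstance)
        (⨆ (j : ℕ) (_ : n ≤ j), MeasurableSpace.comap (X j) inferInstance) ℙ := by
      have hdisj : Disjoint {i : ℕ | i < n} {j : ℕ | n ≤ j} := by
        rw [Set.disjoint_left]; intro i h1 h2; simp at h1 h2; omega
      exact indep_iSup_of_disjoint (fun i => (hXm i).comap_le) hindep.iIndep hdisj
    have hfmX : StronglyMeasurable[⨆ (i : ℕ) (_ : i < n),
        MeasurableSpace.comap (X i) inferInstance] f := by
      refine Measurable.stronglyMeasurable ?_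
      exact fun s _ => hHmX m (le_of_lt hmn) (MeasurableSet.of_discrete (s := (a m) ⁻¹' s))
    have hsuple : (MeasurableSpace.comap (H n) inferInstance
        ⊔ ⨆ (j : ℕ) (_ : n ≤ j), MeasurableSpace.comap (X j) inferInstance)
        ≤ (inferInstance : MeasurableSpace Ω) := sup_le hm₁le h2le
    have hG_le : (⨆ j, ⨆ _ : n ≤ j, MeasurableSpace.comap (H j) inferInstance)
        ≤ MeasurableSpace.comap (H n) inferInstance
          ⊔ ⨆ (j : ℕ) (_ : n ≤ j), MeasurableSpace.comap (X j) inferInstance := by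
      refine iSup₂_le fun j hj => ?_
      refine measurable_iff_comap_le.mp ?_
      have e : (fun ω => H n ω + ∑ i ∈ Finset.Ico n j, X i ω) = H j := by
        funext ω; rw [hH j ω, hH n ω]
        exact Finset.sum_range_add_sum_Ico _ hj
      rw [← e]
      refine Measurable.add (measurable_iff_comap_le.mpr le_sup_left) ?_
      refine Finset.measurable_sum _ fun i hi => ?_
      exact (hXm₂ i (Finset.mem_Ico.mp hi).1).mono le_sup_right le_rfl
    have hm₁G : MeasurableSpace.comap (H n) inferInstance
        ≤ ⨆ j, ⨆ _ : n ≤ j, MeasurableSpace.comap (H j) inferInstance :=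
      le_iSup₂ (f := fun (j : ℕ) (_ : n ≤ j) =>
        MeasurableSpace.comap (H j) inferInstance) n le_rfl
    have hGm0 : (⨆ j, ⨆ _ : n ≤ j, MeasurableSpace.comap (H j) inferInstance)
        ≤ (inferInstance : MeasurableSpace Ω) := iSup₂_le fun j _ => (hHm j).comap_le
    have hAB := aux_condexp_sup hXle h2le h1X hind hfmX hf_int
    have t1 := (condExp_condExp_of_le hG_le hsuple (μ := ℙ) (f := f)).symm
    have t2 := condExp_congr_ae (m := ⨆ j, ⨆ _ : n ≤ j,
      MeasurableSpace.comap (H j) inferInstance) (μ := ℙ) hAB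
    have t3 := condExp_of_aestronglyMeasurable' hGm0
      ((stronglyMeasurable_condExp.mono hm₁G).aestronglyMeasurable)
      (integrable_condExp (f := f) (m := MeasurableSpace.comap (H n) inferInstance) (μ := ℙ))
    exact t1.trans (t2.trans t3)
  · -- the supermartingale inequality
    filter_upwards [hcond.symm, hHle n] with ω h1 h2
    rw [h1, hGn_def]
    exact hcoef m n hmn (H n ω) h2
end

section
/- Let (a_k)_{k≥0} satisfy 1 ≥ a_0 ≥ a_1 ≥ ⋯ ≥ 0 and let f(p) = Σ_{k=0}^∞ (−1)^k a_k p^k, assumed to take values in [0,1]. Fix p ∈ [0,1) (or p ∈ [0,1] if a_k → 0), let X_1, X_2, … be independent Bernoulli(p) random variables, and define U_0 := a_0, L_0 := 0, and for n ≥ 1: if n is odd, L_n := U_{n−1} − a_n·∏_{k=1}^n X_k and U_n := U_{n−1}; if n is even, U_n := L_{n−1} + a_n·∏_{k=1}^n X_k and L_n := L_{n−1}. Then almost surely for every n: L_n ≤ U_n, L_n ∈ [0,1], U_n ∈ [0,1], L_{n−1} ≤ L_n and U_{n−1} ≥ U_n; and E[U_n] − E[L_n] = a_n p^n → 0, with E[L_n]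 → f(p) and E[U_n] → f(p). Consequently Algorithm 3 applied to (L_n, U_n) outputs a valid f(p)-coin and needs more than n inputs with probability a_n p^n. -/
open MeasureTheory ProbabilityTheory Set Finset Filter

noncomputable def stmt14LU (a : ℕ → ℝ) : ℕ → (ℕ → ℝ) → ℝ × ℝ
  | 0, _ => (0, a 0)
  | (n+1), x =>
      if Even (n+1) then
        ((stmt14LU a n x).1, (stmt14LU a n x).1 + a (n+1) * ∏ k ∈ Finset.range (n+1), x k)
      else
        ((stmt14LU a n x).2 - a (n+1) * ∏ k ∈ Finset.range (n+1), x k, (stmt14LU a n x).2)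

lemma stmt14LU_measurable (a : ℕ → ℝ) (n : ℕ) : Measurable (stmt14LU a n) := by
  induction n with
  | zero => exact measurable_const
  | succ n ih =>
      have hprod : Measurable (fun x : ℕ → ℝ => ∏ k ∈ Finset.range (n+1), x k) :=
        Finset.measurable_prod _ (fun k _ => measurable_pi_apply k)
      simp only [stmt14LU]
      split_ifs
      · exact (ih.fst).prodMk ((ih.fst).add (hprod.const_mul _))
      · exact ((ih.snd).sub (hprod.const_mul _)).prodMk (ih.snd)

/-- Proposition 2 of the paper, Bernoulli factory for alternating series:
for `f(p) = Σ (−1)^k a_k p^k` with `1 ≥ a 0 ≥ a 1 ≥ ⋯ ≥ 0`, the random sequences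
`L n`, `U n` built from partial sums evaluated along the coin tosses satisfy the
monotonicity conditions of Algorithm 3, `E[U n] − E[L n] = a n p^n → 0`, and Algorithm 3
outputs a valid `f(p)`-coin needing more than `n` inputs with probability `a n p^n`. -/
theorem stmt_14 {Ω : Type*} [MeasureSpace Ω] [IsProbabilityMeasure (ℙ : Measure Ω)]
    (a : ℕ → ℝ) (ha0 : a 0 ≤ 1) (hmono : Antitone a) (hpos : ∀ k, 0 ≤ a k)
    (p : ℝ) (hp : p ∈ Icc (0 : ℝ) 1) (hp1 : p = 1 → Tendsto a atTop (nhds 0))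
    (f : ℝ)
    (hf : Tendsto (fun n => ∑ k ∈ range n, (-1 : ℝ) ^ k * a k * p ^ k) atTop (nhds f))
    (hf01 : f ∈ Icc (0 : ℝ) 1)
    (X : ℕ → Ω → ℝ) (hXm : ∀ i, Measurable (X i))
    (hindep : iIndepFun X ℙ)
    (hbern : ∀ i, ℙ {ω | X i ω = 1} = ENNReal.ofReal p ∧
      ℙ {ω | X i ω = 0} = ENNReal.ofReal (1 - p))
    (L U : ℕ → Ω → ℝ)
    (hL0 : ∀ ω, L 0 ω = 0) (hU0 : ∀ ω, U 0 ω = a 0)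
    (hodd : ∀ n : ℕ, 1 ≤ n → Odd n → ∀ ω,
      L n ω = U (n - 1) ω - a n * ∏ k ∈ range n, X k ω ∧ U n ω = U (n - 1) ω)
    (heven : ∀ n : ℕ, 1 ≤ n → Even n → ∀ ω,
      U n ω = L (n - 1) ω + a n * ∏ k ∈ range n, X k ω ∧ L n ω = L (n - 1) ω)
    (G : Ω → ℝ) (hGm : Measurable G)
    (hGlaw : Measure.map G ℙ = volume.restrict (Icc (0 : ℝ) 1))
    (hGindep : IndepFun G (fun ω => fun n => X n ω) ℙ) :
    (∀ᵐ ω ∂ℙ, ∀ n, L n ω ≤ U n ω ∧ L n ω ∈ Icc (0 : ℝ) 1 ∧ U n ω ∈ Icc (0 : ℝ) 1 ∧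
      L n ω ≤ L (n + 1) ω ∧ U (n + 1) ω ≤ U n ω) ∧
      (∀ n, (∫ ω, U n ω ∂ℙ) - (∫ ω, L n ω ∂ℙ) = a n * p ^ n) ∧
      Tendsto (fun n => a n * p ^ n) atTop (nhds 0) ∧
      Tendsto (fun n => ∫ ω, L n ω ∂ℙ) atTop (nhds f) ∧
      Tendsto (fun n => ∫ ω, U n ω ∂ℙ) atTop (nhds f) ∧
      ℙ {ω | ∃ n, G ω ≤ L n ω} = ENNReal.ofReal f ∧
      (∀ n, ℙ {ω | L n ω < G ω ∧ G ω ≤ U n ω} = ENNReal.ofReal (a n * p ^ n)) := by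
  obtain ⟨hp0, hple⟩ := hp
  -- algebra : U n - L n = a n * P n for every ω
  have hdiff : ∀ n ω, U n ω - L n ω = a n * ∏ k ∈ range n, X k ω := by
    intro n ω
    match n with
    | 0 => simp [hL0, hU0]
    | (n+1) =>
      rcases Nat.even_or_odd (n+1) with he | ho
      · obtain ⟨h1, h2⟩ := heven (n+1) (by omega) he ω
        rw [h1, h2]; ring
      · obtain ⟨h1, h2⟩ := hodd (n+1) (by omega) ho ω
        rw [h1, h2]; ring
  -- a.s. each coin is 0 or 1
  have hXae : ∀ i, ∀ᵐ ω ∂ℙ, X i ω = 0 ∨ X i ω = 1 := by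
    intro i
    have h1 : MeasurableSet {ω | X i ω = 1} := hXm i (measurableSet_singleton 1)
    have hdisj : Disjoint {ω | X i ω = 0} {ω | X i ω = 1} := by
      rw [Set.disjoint_left]
      intro ω h0' h1'
      simp only [Set.mem_setOf_eq] at h0' h1'
      rw [h0'] at h1'; norm_num at h1'
    have hone : ℙ ({ω | X i ω = 0} ∪ {ω | X i ω = 1}) = 1 := by
      rw [measure_union hdisj h1, (hbern i).1, (hbern i).2,
        ← ENNReal.ofReal_add (by linarith) hp0]
      norm_num
    have hms : MeasurableSet ({ω | X i ω = 0} ∪ {ω | X i ω = 1}) :=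
      (hXm i (measurableSet_singleton 0)).union h1
    have hc : ℙ ({ω | X i ω = 0} ∪ {ω | X i ω = 1})ᶜ = 0 :=
      (prob_compl_eq_zero_iff hms).mpr hone
    rw [ae_iff]
    have hcompl : {ω | ¬(X i ω = 0 ∨ X i ω = 1)} = ({ω | X i ω = 0} ∪ {ω | X i ω = 1})ᶜ := by
      ext ω; simp [not_or]
    rw [hcompl]
    exact hc
  have hE : ∀ᵐ ω ∂ℙ, ∀ i, X i ω = 0 ∨ X i ω = 1 := ae_all_iff.mpr hXae
  -- pointwise facts on the good event
  have hP01 : ∀ ω, (∀ i, X i ω = 0 ∨ X i ω = 1) → ∀ n,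
      (∏ k ∈ range n, X k ω) = 0 ∨ (∏ k ∈ range n, X k ω) = 1 := by
    intro ω hω n
    induction n with
    | zero => simp
    | succ n ih =>
        rw [Finset.prod_range_succ]
        rcases ih with h | h <;> rcases hω n with h' | h' <;> simp [h, h']
  have hPnn : ∀ ω, (∀ i, X i ω = 0 ∨ X i ω = 1) → ∀ n,
      0 ≤ a n * ∏ k ∈ range n, X k ω := by
    intro ω hω n
    rcases hP01 ω hω n with h | h <;> simp [h, hpos n]
  have hPanti : ∀ ω, (∀ i, X i ω = 0 ∨ X i ω = 1) → ∀ n,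
      a (n+1) * ∏ k ∈ range (n+1), X k ω ≤ a n * ∏ k ∈ range n, X k ω := by
    intro ω hω n
    rcases hP01 ω hω (n+1) with h | h
    · rw [h, mul_zero]; exact hPnn ω hω n
    · have hn : (∏ k ∈ range n, X k ω) = 1 := by
        rcases hP01 ω hω n with h' | h'
        · rw [Finset.prod_range_succ, h', zero_mul] at h; norm_num at h
        · exact h'
      rw [h, hn, mul_one, mul_one]
      exact hmono (Nat.le_succ n)
  have hLU1 : ∀ ω, (∀ i, X i ω = 0 ∨ X i ω = 1) → ∀ n,
      L n ω ≤ L (n+1) ω ∧ U (n+1) ω ≤ U n ω := by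
    intro ω hω n
    have hd := hdiff n ω
    have hpa := hPanti ω hω n
    rcases Nat.even_or_odd (n+1) with he | ho
    · obtain ⟨h1, h2⟩ := heven (n+1) (by omega) he ω
      simp only [Nat.add_sub_cancel] at h1 h2
      constructor
      · rw [h2]
      · rw [h1]; linarith
    · obtain ⟨h1, h2⟩ := hodd (n+1) (by omega) ho ω
      simp only [Nat.add_sub_cancel] at h1 h2
      constructor
      · rw [h1]; linarith
      · rw [h2]
  have hLnn : ∀ ω, (∀ i, X i ω = 0 ∨ X i ω = 1) → ∀ n, 0 ≤ L n ω := by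
    intro ω hω n
    induction n with
    | zero => rw [hL0]
    | succ n ih => exact le_trans ih (hLU1 ω hω n).1
  have hUle : ∀ ω, (∀ i, X i ω = 0 ∨ X i ω = 1) → ∀ n, U n ω ≤ a 0 := by
    intro ω hω n
    induction n with
    | zero => rw [hU0]
    | succ n ih => exact le_trans (hLU1 ω hω n).2 ih
  have hLleU : ∀ ω, (∀ i, X i ω = 0 ∨ X i ω = 1) → ∀ n, L n ω ≤ U n ω := by
    intro ω hω n
    have := hPnn ω hω n
    have := hdiff n ω
    linarith
  -- measure of the event that all first n coins are 1
  have hA : ∀ n, ℙ (⋂ k ∈ Finset.range n, X k ⁻¹' {1}) = ENNReal.ofReal (p ^ n) := by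
    intro n
    rw [hindep.meas_biInter (fun i _ => ⟨{1}, measurableSet_singleton 1, rfl⟩)]
    have : ∀ i ∈ Finset.range n, ℙ (X i ⁻¹' {1}) = ENNReal.ofReal p := by
      intro i _
      have : X i ⁻¹' {1} = {ω | X i ω = 1} := by ext ω; simp
      rw [this, (hbern i).1]
    rw [Finset.prod_congr rfl this, Finset.prod_const, Finset.card_range,
      ← ENNReal.ofReal_pow hp0]
  have hAms : ∀ n, MeasurableSet (⋂ k ∈ Finset.range n, X k ⁻¹' {1}) := by
    intro n
    exact MeasurableSet.biInter (Finset.range n).countable_toSet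
      (fun k _ => hXm k (measurableSet_singleton 1))
  have hPind : ∀ n, (fun ω => ∏ k ∈ range n, X k ω)
      =ᵐ[ℙ] (⋂ k ∈ Finset.range n, X k ⁻¹' {1}).indicator (fun _ => (1:ℝ)) := by
    intro n
    filter_upwards [hE] with ω hω
    by_cases hmem : ω ∈ ⋂ k ∈ Finset.range n, X k ⁻¹' {1}
    · rw [Set.indicator_of_mem hmem]
      simp only [Set.mem_iInter, Set.mem_preimage, Set.mem_singleton_iff] at hmem
      exact Finset.prod_eq_one fun k hk => hmem k hk
    · rw [Set.indicator_of_notMem hmem]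
      simp only [Set.mem_iInter, Set.mem_preimage, Set.mem_singleton_iff, not_forall] at hmem
      obtain ⟨k, hk, hk1⟩ := hmem
      refine Finset.prod_eq_zero hk ?_
      rcases hω k with h | h
      · exact h
      · exact absurd h hk1
  have hPint : ∀ n, Integrable (fun ω => ∏ k ∈ range n, X k ω) ℙ := by
    intro n
    exact ((integrable_const (1:ℝ)).indicator (hAms n)).congr (hPind n).symm
  have hPval : ∀ n, ∫ ω, ∏ k ∈ range n, X k ω ∂ℙ = p ^ n := by
    intro n
    rw [integral_congr_ae (hPind n), integral_indicator_const (1:ℝ) (hAms n), measureReal_def, hA n,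
      smul_eq_mul, mul_one, ENNReal.toReal_ofReal (pow_nonneg hp0 n)]
  -- integrability of L and U
  have hIntLU : ∀ n, Integrable (L n) ℙ ∧ Integrable (U n) ℙ := by
    intro n
    induction n with
    | zero =>
        exact ⟨(integrable_const (0:ℝ)).congr (ae_of_all _ fun ω => (hL0 ω).symm),
          (integrable_const (a 0)).congr (ae_of_all _ fun ω => (hU0 ω).symm)⟩
    | succ n ih =>
        rcases Nat.even_or_odd (n+1) with he | ho
        · have h := heven (n+1) (by omega) he
          refine ⟨ih.1.congr (ae_of_all _ fun ω => ((h ω).2).symm), ?_⟩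
          exact (ih.1.add ((hPint (n+1)).const_mul _)).congr (ae_of_all _ fun ω => ((h ω).1).symm)
        · have h := hodd (n+1) (by omega) ho
          refine ⟨?_, ih.2.congr (ae_of_all _ fun ω => ((h ω).2).symm)⟩
          exact (ih.2.sub ((hPint (n+1)).const_mul _)).congr (ae_of_all _ fun ω => ((h ω).1).symm)
  -- conjunct 2
  have h2 : ∀ n, (∫ ω, U n ω ∂ℙ) - (∫ ω, L n ω ∂ℙ) = a n * p ^ n := by
    intro n
    rw [← integral_sub (hIntLU n).2 (hIntLU n).1,
      integral_congr_ae (ae_of_all _ fun ω => hdiff n ω), integral_const_mul, hPval n]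
  -- conjunct 3
  have h3 : Tendsto (fun n => a n * p ^ n) atTop (nhds 0) := by
    rcases eq_or_lt_of_le hple with hpe | hplt
    · subst hpe
      simpa using hp1 rfl
    · apply squeeze_zero (fun n => mul_nonneg (hpos n) (pow_nonneg hp0 n)) (fun n => ?_)
        (tendsto_pow_atTop_nhds_zero_of_lt_one hp0 hplt)
      have h1 : a n ≤ 1 := le_trans (hmono (Nat.zero_le n)) ha0
      nlinarith [pow_nonneg hp0 n, hpos n]
  -- value of ∫ L n
  have hLval : ∀ n, (∫ ω, L n ω ∂ℙ)
      = ∑ k ∈ range (2 * ((n+1)/2)), (-1:ℝ) ^ k * a k * p ^ k := by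
    intro n
    induction n with
    | zero =>
        have : (∫ ω, L 0 ω ∂ℙ) = 0 := by
          rw [integral_congr_ae (ae_of_all _ fun ω => hL0 ω), integral_zero]
        rw [this]
        norm_num
    | succ n ih =>
        rcases Nat.even_or_odd (n+1) with he | ho
        · have h := heven (n+1) (by omega) he
          have hL' : (∫ ω, L (n+1) ω ∂ℙ) = ∫ ω, L n ω ∂ℙ :=
            integral_congr_ae (ae_of_all _ fun ω => (h ω).2)
          rw [hL', ih]
          have : 2 * ((n+1+1)/2) = 2 * ((n+1)/2) := by
            obtain ⟨m, hm⟩ := he; omega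
          rw [this]
        · have hm : (n + 1) % 2 = 1 := Nat.odd_iff.mp ho
          have h := hodd (n+1) (by omega) ho
          simp only [Nat.add_sub_cancel] at h
          have hLn1 : (∫ ω, L (n+1) ω ∂ℙ) = (∫ ω, U n ω ∂ℙ) - a (n+1) * p ^ (n+1) := by
            rw [integral_congr_ae (ae_of_all _ fun ω => (h ω).1),
              integral_sub (hIntLU n).2 ((hPint (n+1)).const_mul _),
              integral_const_mul, hPval (n+1)]
          have hUn : (∫ ω, U n ω ∂ℙ) = (∫ ω, L n ω ∂ℙ) + a n * p ^ n := by
            have := h2 n; linarith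
          rw [hLn1, hUn, ih]
          have e1 : 2 * ((n+1)/2) = n := by omega
          have e2 : 2 * ((n+1+1)/2) = n + 2 := by omega
          rw [e1, e2, Finset.sum_range_succ, Finset.sum_range_succ]
          have hne : (-1:ℝ) ^ n = 1 := Even.neg_one_pow (Nat.even_iff.mpr (by omega))
          have hno : (-1:ℝ) ^ (n+1) = -1 := Odd.neg_one_pow ho
          rw [hne, hno]
          ring
  -- conjuncts 4 and 5
  have hgt : Tendsto (fun n => 2 * ((n+1)/2)) atTop atTop :=
    tendsto_atTop_mono (fun n => by simp only [id_eq]; omega) tendsto_id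
  have h4 : Tendsto (fun n => ∫ ω, L n ω ∂ℙ) atTop (nhds f) := by
    simp only [hLval]
    exact hf.comp hgt
  have h5 : Tendsto (fun n => ∫ ω, U n ω ∂ℙ) atTop (nhds f) := by
    have he : (fun n => ∫ ω, U n ω ∂ℙ)
        = fun n => (∫ ω, L n ω ∂ℙ) + a n * p ^ n := by
      funext n
      have := h2 n; linarith
    rw [he]
    simpa using h4.add h3
  -- the G part
  set Z : Ω → (ℕ → ℝ) := fun ω n => X n ω with hZdef
  have hZm : Measurable Z := measurable_pi_lambda _ (fun n => hXm n)
  haveI : IsProbabilityMeasure (Measure.map Z ℙ) := Measure.isProbabilityMeasure_map hZm.aemeasurable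
  haveI : IsProbabilityMeasure (Measure.map G ℙ) := Measure.isProbabilityMeasure_map hGm.aemeasurable
  have hmap : Measure.map (fun ω => (G ω, Z ω)) ℙ
      = (Measure.map G ℙ).prod (Measure.map Z ℙ) :=
    (indepFun_iff_map_prod_eq_prod_map_map hGm.aemeasurable hZm.aemeasurable).mp hGindep
  have hμGIoc : ∀ l u : ℝ, 0 ≤ l → l ≤ u → u ≤ 1 →
      Measure.map G ℙ (Ioc l u) = ENNReal.ofReal (u - l) := by
    intro l u h0 hlu h1
    rw [hGlaw, Measure.restrict_apply measurableSet_Ioc]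
    have hsub : Ioc l u ⊆ Icc 0 1 := fun x hx =>
      ⟨le_trans h0 (le_of_lt hx.1), le_trans hx.2 h1⟩
    rw [Set.inter_eq_left.mpr hsub, Real.volume_Ioc]
  have hμGIic : ∀ l : ℝ, 0 ≤ l → l ≤ 1 →
      Measure.map G ℙ (Iic l) = ENNReal.ofReal l := by
    intro l h0 h1
    rw [hGlaw, Measure.restrict_apply measurableSet_Iic]
    have : Iic l ∩ Icc 0 1 = Icc 0 l := by
      ext x
      simp only [Set.mem_inter_iff, Set.mem_Iic, Set.mem_Icc]
      constructor
      · rintro ⟨ha, hb, hc⟩; exact ⟨hb, ha⟩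
      · rintro ⟨ha, hb⟩; exact ⟨hb, ha, le_trans hb h1⟩
    rw [this, Real.volume_Icc, sub_zero]
  -- identification of L, U with measurable functions of Z
  have hLUeq : ∀ n ω, L n ω = (stmt14LU a n (Z ω)).1 ∧ U n ω = (stmt14LU a n (Z ω)).2 := by
    intro n
    induction n with
    | zero => intro ω; simp [stmt14LU, hL0, hU0]
    | succ n ih =>
        intro ω
        rcases Nat.even_or_odd (n+1) with he | ho
        · obtain ⟨h1, h2⟩ := heven (n+1) (by omega) he ω
          simp only [Nat.add_sub_cancel] at h1 h2
          simp only [stmt14LU, if_pos he]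
          exact ⟨by rw [h2, (ih ω).1], by rw [h1, (ih ω).1]⟩
        · obtain ⟨h1, h2⟩ := hodd (n+1) (by omega) ho ω
          simp only [Nat.add_sub_cancel] at h1 h2
          simp only [stmt14LU, if_neg (Nat.not_even_iff_odd.mpr ho)]
          exact ⟨by rw [h1, (ih ω).2], by rw [h2, (ih ω).2]⟩
  have hLm : ∀ n, Measurable (L n) := by
    intro n
    have : L n = fun ω => (stmt14LU a n (Z ω)).1 := funext fun ω => (hLUeq n ω).1
    rw [this]
    exact (measurable_fst.comp (stmt14LU_measurable a n)).comp hZm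
  -- conjunct 7
  have h7 : ∀ n, ℙ {ω | L n ω < G ω ∧ G ω ≤ U n ω} = ENNReal.ofReal (a n * p ^ n) := by
    intro n
    have hlm : Measurable (fun x : ℕ → ℝ => (stmt14LU a n x).1) :=
      measurable_fst.comp (stmt14LU_measurable a n)
    have hum : Measurable (fun x : ℕ → ℝ => (stmt14LU a n x).2) :=
      measurable_snd.comp (stmt14LU_measurable a n)
    set S : Set (ℝ × (ℕ → ℝ)) :=
      {q | (stmt14LU a n q.2).1 < q.1 ∧ q.1 ≤ (stmt14LU a n q.2).2} with hSdef
    have hSm : MeasurableSet S := by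
      apply MeasurableSet.inter
      · exact measurableSet_lt (hlm.comp measurable_snd) measurable_fst
      · exact measurableSet_le measurable_fst (hum.comp measurable_snd)
    have hset : {ω | L n ω < G ω ∧ G ω ≤ U n ω} = (fun ω => (G ω, Z ω)) ⁻¹' S := by
      ext ω
      simp only [Set.mem_setOf_eq, Set.mem_preimage, hSdef, (hLUeq n ω).1, (hLUeq n ω).2]
    rw [hset, ← Measure.map_apply (hGm.prodMk hZm) hSm, hmap,
      Measure.prod_apply_symm hSm]
    have hae : ∀ᵐ x ∂(Measure.map Z ℙ),
        0 ≤ (stmt14LU a n x).1 ∧ (stmt14LU a n x).1 ≤ (stmt14LU a n x).2 ∧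
        (stmt14LU a n x).2 ≤ 1 := by
      rw [ae_map_iff hZm.aemeasurable]
      · filter_upwards [hE] with ω hω
        refine ⟨?_, ?_, ?_⟩
        · rw [← (hLUeq n ω).1]; exact hLnn ω hω n
        · rw [← (hLUeq n ω).1, ← (hLUeq n ω).2]; exact hLleU ω hω n
        · rw [← (hLUeq n ω).2]; exact le_trans (hUle ω hω n) ha0
      · exact MeasurableSet.inter (measurableSet_le measurable_const hlm)
          (MeasurableSet.inter (measurableSet_le hlm hum) (measurableSet_le hum measurable_const))
    have hcong : ∫⁻ x, (Measure.map G ℙ) ((fun g => (g, x)) ⁻¹' S) ∂(Measure.map Z ℙ)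
        = ∫⁻ x, ENNReal.ofReal ((stmt14LU a n x).2 - (stmt14LU a n x).1) ∂(Measure.map Z ℙ) := by
      refine lintegral_congr_ae ?_
      filter_upwards [hae] with x hx
      have : ((fun g : ℝ => (g, x)) ⁻¹' S) = Ioc ((stmt14LU a n x).1) ((stmt14LU a n x).2) := rfl
      rw [this, hμGIoc _ _ hx.1 hx.2.1 hx.2.2]
    rw [hcong, lintegral_map (f := fun x => ENNReal.ofReal ((stmt14LU a n x).2 - (stmt14LU a n x).1)) (hum.sub hlm).ennreal_ofReal hZm]
    have hcong2 : ∫⁻ ω, ENNReal.ofReal ((stmt14LU a n (Z ω)).2 - (stmt14LU a n (Z ω)).1) ∂ℙ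
        = ∫⁻ ω, ENNReal.ofReal (U n ω - L n ω) ∂ℙ := by
      refine lintegral_congr fun ω => ?_
      rw [← (hLUeq n ω).1, ← (hLUeq n ω).2]
    have hint : Integrable (fun ω => U n ω - L n ω) ℙ :=
      ((hIntLU n).2.sub (hIntLU n).1).congr (ae_of_all _ fun ω => rfl)
    rw [hcong2, ← ofReal_integral_eq_lintegral_ofReal hint ?_]
    · congr 1
      rw [integral_sub (hIntLU n).2 (hIntLU n).1]
      exact h2 n
    · filter_upwards [hE] with ω hω
      have := hLleU ω hω n
      simp only [Pi.zero_apply]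
      linarith
  -- conjunct 6
  have hB : ∀ n, ℙ {ω | G ω ≤ L n ω} = ENNReal.ofReal (∫ ω, L n ω ∂ℙ) := by
    intro n
    have hlm : Measurable (fun x : ℕ → ℝ => (stmt14LU a n x).1) :=
      measurable_fst.comp (stmt14LU_measurable a n)
    set S : Set (ℝ × (ℕ → ℝ)) := {q | q.1 ≤ (stmt14LU a n q.2).1} with hSdef
    have hSm : MeasurableSet S := measurableSet_le measurable_fst (hlm.comp measurable_snd)
    have hset : {ω | G ω ≤ L n ω} = (fun ω => (G ω, Z ω)) ⁻¹' S := by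
      ext ω
      simp only [Set.mem_setOf_eq, Set.mem_preimage, hSdef, (hLUeq n ω).1]
    rw [hset, ← Measure.map_apply (hGm.prodMk hZm) hSm, hmap,
      Measure.prod_apply_symm hSm]
    have hae : ∀ᵐ x ∂(Measure.map Z ℙ),
        0 ≤ (stmt14LU a n x).1 ∧ (stmt14LU a n x).1 ≤ 1 := by
      rw [ae_map_iff hZm.aemeasurable]
      · filter_upwards [hE] with ω hω
        constructor
        · rw [← (hLUeq n ω).1]; exact hLnn ω hω n
        · rw [← (hLUeq n ω).1]
          exact le_trans (hLleU ω hω n) (le_trans (hUle ω hω n) ha0)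
      · exact MeasurableSet.inter (measurableSet_le measurable_const hlm)
          (measurableSet_le hlm measurable_const)
    have hcong : ∫⁻ x, (Measure.map G ℙ) ((fun g => (g, x)) ⁻¹' S) ∂(Measure.map Z ℙ)
        = ∫⁻ x, ENNReal.ofReal ((stmt14LU a n x).1) ∂(Measure.map Z ℙ) := by
      refine lintegral_congr_ae ?_
      filter_upwards [hae] with x hx
      have : ((fun g : ℝ => (g, x)) ⁻¹' S) = Iic ((stmt14LU a n x).1) := rfl
      rw [this, hμGIic _ hx.1 hx.2]
    rw [hcong, lintegral_map hlm.ennreal_ofReal hZm]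
    have hcong2 : ∫⁻ ω, ENNReal.ofReal ((stmt14LU a n (Z ω)).1) ∂ℙ
        = ∫⁻ ω, ENNReal.ofReal (L n ω) ∂ℙ := by
      refine lintegral_congr fun ω => ?_
      rw [← (hLUeq n ω).1]
    rw [hcong2, ← ofReal_integral_eq_lintegral_ofReal (hIntLU n).1 ?_]
    filter_upwards [hE] with ω hω
    simpa using hLnn ω hω n
  have h6 : ℙ {ω | ∃ n, G ω ≤ L n ω} = ENNReal.ofReal f := by
    set E : Set Ω := {ω | ∀ i, X i ω = 0 ∨ X i ω = 1} with hEdef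
    have hEc : ℙ Eᶜ = 0 := by
      rw [hEdef, Set.compl_setOf]
      exact ae_iff.mp hE
    set B : ℕ → Set Ω := fun n => {ω | G ω ≤ L n ω} with hBdef
    have hgoal : {ω | ∃ n, G ω ≤ L n ω} = ⋃ n, B n := by
      ext ω; simp [hBdef]
    have hmonoC : Monotone (fun n => B n ∩ E) := by
      apply monotone_nat_of_le_succ
      rintro n ω ⟨hb, he⟩
      exact ⟨le_trans hb (hLU1 ω he n).1, he⟩
    have hUnion : ℙ (⋃ n, B n) = ℙ (⋃ n, B n ∩ E) := by
      rw [← Set.iUnion_inter, measure_inter_conull hEc]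
    rw [hgoal, hUnion, hmonoC.directed_le.measure_iUnion]
    have hval : ∀ n, ℙ (B n ∩ E) = ENNReal.ofReal (∫ ω, L n ω ∂ℙ) := fun n => by
      rw [measure_inter_conull hEc, hB n]
    rw [iSup_congr hval]
    have hmono' : Monotone (fun n => ENNReal.ofReal (∫ ω, L n ω ∂ℙ)) := by
      apply monotone_nat_of_le_succ
      intro n
      apply ENNReal.ofReal_le_ofReal
      apply integral_mono_ae (hIntLU n).1 (hIntLU (n+1)).1
      filter_upwards [hE] with ω hω
      exact (hLU1 ω hω n).1
    have htend : Tendsto (fun n => ENNReal.ofReal (∫ ω, L n ω ∂ℙ)) atTop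
        (nhds (ENNReal.ofReal f)) := (ENNReal.continuous_ofReal.tendsto f).comp h4
    exact tendsto_nhds_unique (tendsto_atTop_iSup hmono') htend
  refine ⟨?_, h2, h3, h4, h5, h6, h7⟩
  filter_upwards [hE] with ω hω n
  exact ⟨hLleU ω hω n,
    ⟨hLnn ω hω n, le_trans (hLleU ω hω n) (le_trans (hUle ω hω n) ha0)⟩,
    ⟨le_trans (hLnn ω hω n) (hLleU ω hω n), le_trans (hUle ω hω n) ha0⟩,
    (hLU1 ω hω n).1, (hLU1 ω hω n).2⟩
end
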